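/- arXiv:2212.09706 — 7 statements merged into one kernel-verified Lean document; each statement's English description precedes it below -/
import Mathlib

section
/- If the random vector (P_1,...,P_K) of standard uniform random variables is weakly negatively dependent, then for every α ∈ (0,1), the probability that the Simes statistic S_K(P) = min_{k=1..K} (K/k)·P_{(k)} is at most α is bounded by α + Σ_{k=2}^{K} C(K,k)·(αk/K)^k, where P_{(k)} denotes the k-th order statistic. -/
open MeasureTheory


/-- The Simes function applied to the values `p i`, `i ∈ A`:
`min over k of (|A|/k) · (k-th smallest value)`. -/
noncomputable def simesOn {ι : Type*} (A : Finset ι) (p : ι → ℝ) : ℝ :=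
  if h : A.Nonempty then
    ((Finset.range A.card).image fun j =>
      (A.card : ℝ) / (j + 1) * ((A.val.map p).sort (· ≤ ·)).getD j 0).min'
      ((Finset.nonempty_range_iff.mpr (Finset.card_ne_zero.mpr h)).image _)
  else 0

/-!
If `S_K(p) ≤ α`, then `p_(k) ≤ αk/K` for some `k`, so at least `k` of the p-values lie below
`αk/K`. A union bound over `k` and over the `k`-element sets `A`, together with weak negative
dependence and uniform marginals on each event `⋂_{i ∈ A} {P_i ≤ αk/K}`, bounds the probability
by `∑_{k=1}^K C(K,k) (αk/K)^k`, whose `k = 1` term is `α`.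
-/

open Finset

theorem Multiset.succ_le_card_filter_le_of_sort_getElem_le {α : Type*} [LinearOrder α]
    (s : Multiset α) {j : ℕ} (hj : j < (s.sort (· ≤ ·)).length) {x : α}
    (hx : (s.sort (· ≤ ·))[j] ≤ x) : j + 1 ≤ Multiset.card (s.filter (· ≤ x)) := by
  set l := s.sort (· ≤ ·)
  have htake : ∀ a ∈ l.take (j + 1), a ≤ x := by
    intro a ha
    obtain ⟨i, hi, rfl⟩ := List.mem_take_iff_getElem.mp ha
    exact ((Multiset.pairwise_sort s _).rel_get_of_le (a := ⟨i, by omega⟩) (b := ⟨j, hj⟩)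
      (Fin.mk_le_mk.mpr (by omega))).trans hx
  have hle : (l.take (j + 1) : Multiset α) ≤ s.filter (· ≤ x) := by
    refine Multiset.le_filter.mpr ⟨?_, by simpa using htake⟩
    conv_rhs => rw [← Multiset.sort_eq s (· ≤ ·)]
    exact (List.take_sublist _ _).subperm
  simpa [List.length_take, hj] using Multiset.card_le_card hle

theorem exists_le_card_filter_of_simesOn_le {ι : Type*} {A : Finset ι} (hA : A.Nonempty)
    {p : ι → ℝ} {α : ℝ} (h : simesOn A p ≤ α) :
    ∃ k ∈ Icc 1 #A, k ≤ #{i ∈ A | p i ≤ α * k / #A} := by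
  rw [simesOn, dif_pos hA] at h
  generalize_proofs _ _ hne at h
  obtain ⟨j, hj, hmin⟩ := mem_image.mp (min'_mem _ hne)
  rw [← hmin] at h
  rw [mem_range] at hj
  set l := (A.val.map p).sort (· ≤ ·)
  have hjl : j < l.length := by simpa [l] using hj
  have hj1 : (0 : ℝ) < j + 1 := by positivity
  have hAR : (0 : ℝ) < #A := by exact_mod_cast hA.card_pos
  have hx : l[j] ≤ α * (j + 1 : ℕ) / #A := by
    rw [List.getD_eq_getElem _ _ hjl, div_mul_eq_mul_div, div_le_iff₀ hj1] at h
    rw [le_div_iff₀ hAR]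
    push_cast
    linarith
  refine ⟨j + 1, by simp only [mem_Icc]; omega, ?_⟩
  have := (A.val.map p).succ_le_card_filter_le_of_sort_getElem_le hjl hx
  rwa [Multiset.filter_map, Multiset.card_map] at this

def WeaklyNegDependent {ι Ω : Type*} [MeasurableSpace Ω] (μ : Measure Ω) (P : ι → Ω → ℝ) :
    Prop :=
  ∀ (A : Finset ι) (x : ℝ), μ (⋂ i ∈ A, {ω | P i ω ≤ x}) ≤ ∏ i ∈ A, μ {ω | P i ω ≤ x}

theorem WeaklyNegDependent.measure_le_card_filter_le {ι Ω : Type*} [Fintype ι]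
    [MeasurableSpace Ω] {μ : Measure Ω} {P : ι → Ω → ℝ} (hP : WeaklyNegDependent μ P) {x : ℝ}
    {c : ENNReal} (hc : ∀ i, μ {ω | P i ω ≤ x} ≤ c) (k : ℕ) :
    μ {ω | k ≤ #{i | P i ω ≤ x}} ≤ (Fintype.card ι).choose k * c ^ k := by
  calc μ {ω | k ≤ #{i | P i ω ≤ x}}
      ≤ μ (⋃ A ∈ powersetCard k univ, ⋂ i ∈ A, {ω | P i ω ≤ x}) := by
        refine measure_mono fun ω hω => ?_
        obtain ⟨A, hAsub, hAk⟩ := exists_subset_card_eq hω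
        simp only [Set.mem_iUnion, Set.mem_iInter, mem_powersetCard]
        exact ⟨A, ⟨subset_univ A, hAk⟩, fun i hi => (mem_filter.mp (hAsub hi)).2⟩
    _ ≤ ∑ A ∈ powersetCard k univ, μ (⋂ i ∈ A, {ω | P i ω ≤ x}) := measure_biUnion_finset_le _ _
    _ ≤ ∑ _A ∈ powersetCard k (univ : Finset ι), c ^ k := by
        refine sum_le_sum fun A hA => (hP A x).trans ?_
        rw [← (mem_powersetCard.mp hA).2]
        exact prod_le_pow_card _ _ _ fun i _ => hc i
    _ = (Fintype.card ι).choose k * c ^ k := by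
        rw [sum_const, card_powersetCard, card_univ, nsmul_eq_mul]

theorem sum_Icc_one_choose_mul_pow {K : ℕ} (hK : 0 < K) (α : ℝ) :
    ∑ k ∈ Icc 1 K, (K.choose k : ℝ) * (α * k / K) ^ k =
      α + ∑ k ∈ Icc 2 K, (K.choose k : ℝ) * (α * k / K) ^ k := by
  rw [Icc_eq_cons_Ioc hK, sum_cons, Nat.choose_one_right, ← Icc_succ_left_eq_Ioc,
    Order.succ_eq_add_one]
  congr 1
  push_cast
  field_simp

theorem simes_wnd_additive_bound_general {Ω : Type*} [MeasurableSpace Ω] (μ : Measure Ω)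
    (K : ℕ) (hK : 0 < K) (P : Fin K → Ω → ℝ)
    (hunif : ∀ k, ∀ x ∈ Set.Icc (0 : ℝ) 1, μ {ω | P k ω ≤ x} = ENNReal.ofReal x)
    (hwnd : ∀ (A : Finset (Fin K)) (x : ℝ),
      μ (⋂ k ∈ A, {ω | P k ω ≤ x}) ≤ ∏ k ∈ A, μ {ω | P k ω ≤ x})
    (α : ℝ) (hα : α ∈ Set.Ioo (0 : ℝ) 1) :
    μ {ω | simesOn Finset.univ (fun k => P k ω) ≤ α} ≤
      ENNReal.ofReal (α + ∑ k ∈ Finset.Icc 2 K, (K.choose k : ℝ) * (α * k / K) ^ k) := by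
  obtain ⟨hα0, hα1⟩ := hα
  have hx : ∀ k ∈ Icc 1 K, α * k / K ∈ Set.Icc (0 : ℝ) 1 := fun k hk => by
    have hkK : (k : ℝ) ≤ K := by exact_mod_cast (mem_Icc.mp hk).2
    refine ⟨by positivity, div_le_one_of_le₀ ?_ (Nat.cast_nonneg K)⟩
    nlinarith
  have hcover : {ω | simesOn univ (fun k => P k ω) ≤ α} ⊆
      ⋃ k ∈ Icc 1 K, {ω | k ≤ #{i | P i ω ≤ α * k / K}} := fun ω hω => by
    obtain ⟨k, hk, hkle⟩ :=
      exists_le_card_filter_of_simesOn_le (univ_nonempty_iff.mpr ⟨⟨0, hK⟩⟩) hω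
    rw [card_univ, Fintype.card_fin] at hk hkle
    exact Set.mem_biUnion hk hkle
  calc μ {ω | simesOn univ (fun k => P k ω) ≤ α}
      ≤ ∑ k ∈ Icc 1 K, μ {ω | k ≤ #{i | P i ω ≤ α * k / K}} :=
        (measure_mono hcover).trans (measure_biUnion_finset_le _ _)
    _ ≤ ∑ k ∈ Icc 1 K, (K.choose k : ENNReal) * ENNReal.ofReal (α * k / K) ^ k :=
        sum_le_sum fun k hk => by
          simpa using WeaklyNegDependent.measure_le_card_filter_le hwnd
            (fun i => (hunif i _ (hx k hk)).le) k
    _ = ENNReal.ofReal (∑ k ∈ Icc 1 K, (K.choose k : ℝ) * (α * k / K) ^ k) := by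
        rw [ENNReal.ofReal_sum_of_nonneg fun k hk =>
          mul_nonneg (Nat.cast_nonneg _) (pow_nonneg (hx k hk).1 _)]
        refine sum_congr rfl fun k hk => ?_
        rw [ENNReal.ofReal_mul (Nat.cast_nonneg _), ENNReal.ofReal_natCast,
          ENNReal.ofReal_pow (hx k hk).1]
    _ = _ := by rw [sum_Icc_one_choose_mul_pow hK]

/-- If standard uniform p-values `P₁,…,P_K` are weakly negatively dependent, then for every
`α ∈ (0,1)`, `P(S_K(P) ≤ α) ≤ α + ∑_{k=2}^K C(K,k) (αk/K)^k`. -/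
theorem simes_wnd_additive_bound {Ω : Type*} [MeasurableSpace Ω] (μ : Measure Ω)
    [IsProbabilityMeasure μ] (K : ℕ) (hK : 0 < K) (P : Fin K → Ω → ℝ)
    (hunif : ∀ k, ∀ x ∈ Set.Icc (0 : ℝ) 1, μ {ω | P k ω ≤ x} = ENNReal.ofReal x)
    (hwnd : ∀ (A : Finset (Fin K)) (x : ℝ),
      μ (⋂ k ∈ A, {ω | P k ω ≤ x}) ≤ ∏ k ∈ A, μ {ω | P k ω ≤ x})
    (α : ℝ) (hα : α ∈ Set.Ioo (0 : ℝ) 1) :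
    μ {ω | simesOn Finset.univ (fun k => P k ω) ≤ α} ≤
      ENNReal.ofReal (α + ∑ k ∈ Finset.Icc 2 K, (K.choose k : ℝ) * (α * k / K) ^ k) :=
  simes_wnd_additive_bound_general μ K hK P hunif hwnd α hα
end

section
/- For all α ∈ (0, 1/e), the sum Σ_{k=1}^{K} C(K,k)·(αk/K)^k is at most α + 2α² + (9/2)α³ + (1/√(8π))·(eα)⁴/(1 − eα), for any positive integer K. -/
/-!
Since `C(K,k) ≤ K^k / k!`, the `k`-th term is at most `(αk)^k / k!`. For `k ≤ 3` these are exactly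
`α`, `2α²` and `(9/2)α³`. For `k ≥ 4` Stirling's lower bound `k! ≥ √(2πk) (k/e)^k` turns the term
into at most `(eα)^k / √(8π)`, and the geometric series in `eα < 1` sums the tail.
-/

open Finset Real Nat

lemma choose_mul_div_pow_le (n k : ℕ) {a : ℝ} (ha : 0 ≤ a) :
    (n.choose k : ℝ) * (a / n) ^ k ≤ a ^ k / k ! := by
  calc (n.choose k : ℝ) * (a / n) ^ k ≤ (n ^ k / k !) * (a / n) ^ k := by
        gcongr; exact choose_le_pow_div k n
    _ = (n * (a / n)) ^ k / k ! := by ring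
    _ ≤ a ^ k / k ! := by
        gcongr
        rcases eq_or_ne (n : ℝ) 0 with hn | hn
        · simpa [hn] using ha
        · rw [mul_div_cancel₀ a hn]

lemma mul_natCast_pow_self_div_factorial_le {k : ℕ} (hk : k ≠ 0) {a : ℝ} (ha : 0 ≤ a) :
    (a * k) ^ k / k ! ≤ (exp 1 * a) ^ k / √(2 * π * k) := by
  rw [div_le_div_iff₀ (by positivity) (by positivity)]
  calc (a * k) ^ k * √(2 * π * k) = (exp 1 * a) ^ k * (√(2 * π * k) * (k / exp 1) ^ k) := by
        have : exp 1 * a * (k / exp 1) = a * k := by field_simp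
        rw [mul_left_comm, ← mul_pow, this, mul_comm]
    _ ≤ (exp 1 * a) ^ k * k ! := by gcongr; exact Stirling.le_factorial_stirling k

lemma mul_natCast_pow_self_div_factorial_le_of_four_le {k : ℕ} (hk : 4 ≤ k) {a : ℝ}
    (ha : 0 ≤ a) :
    (a * k) ^ k / k ! ≤ (exp 1 * a) ^ k / √(8 * π) := by
  have hk4 : (4 : ℝ) ≤ k := by exact_mod_cast hk
  calc _ ≤ (exp 1 * a) ^ k / √(2 * π * k) := mul_natCast_pow_self_div_factorial_le (by omega) ha
    _ ≤ (exp 1 * a) ^ k / √(8 * π) :=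
        div_le_div_of_nonneg_left (by positivity) (by positivity)
          (sqrt_le_sqrt (by nlinarith [pi_pos]))

lemma sum_Icc_one_three_mul_natCast_pow_self_div_factorial (a : ℝ) :
    ∑ k ∈ Icc 1 3, (a * k) ^ k / k ! = a + 2 * a ^ 2 + 9 / 2 * a ^ 3 := by
  simp only [reduceAdd, one_le_ofNat, sum_Icc_succ_top, Icc_self, sum_singleton, cast_one, mul_one,
    pow_one, factorial, succ_eq_add_one, zero_add, div_one, cast_ofNat, reduceMul]
  ring

theorem simes_sum_bound_general (K : ℕ) (α : ℝ) (h0 : 0 < α)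
    (h1 : α < 1 / Real.exp 1) :
    ∑ k ∈ Finset.Icc 1 K, (K.choose k : ℝ) * (α * k / K) ^ k ≤
      α + 2 * α ^ 2 + 9 / 2 * α ^ 3 +
        1 / Real.sqrt (8 * Real.pi) * (Real.exp 1 * α) ^ 4 / (1 - Real.exp 1 * α) := by
  set x := exp 1 * α
  have hx1 : x < 1 := by rwa [lt_div_iff₀ (exp_pos 1), mul_comm] at h1
  have hterm (k : ℕ) : (K.choose k : ℝ) * (α * k / K) ^ k ≤ (α * k) ^ k / k ! :=
    choose_mul_div_pow_le K k (by positivity)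
  have hhead : ∑ k ∈ (Icc 1 K).filter (· ≤ 3), (K.choose k : ℝ) * (α * k / K) ^ k ≤
      α + 2 * α ^ 2 + 9 / 2 * α ^ 3 :=
    calc _ ≤ ∑ k ∈ (Icc 1 K).filter (· ≤ 3), (α * k) ^ k / k ! := sum_le_sum fun k _ ↦ hterm k
      _ ≤ ∑ k ∈ Icc 1 3, (α * k) ^ k / k ! :=
          sum_le_sum_of_subset_of_nonneg (fun k ↦ by simp; omega) fun _ _ _ ↦ by positivity
      _ = α + 2 * α ^ 2 + 9 / 2 * α ^ 3 :=
          sum_Icc_one_three_mul_natCast_pow_self_div_factorial α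
  have htail : ∑ k ∈ (Icc 1 K).filter (¬ · ≤ 3), (K.choose k : ℝ) * (α * k / K) ^ k ≤
      1 / √(8 * π) * x ^ 4 / (1 - x) :=
    calc _ ≤ ∑ k ∈ (Icc 1 K).filter (¬ · ≤ 3), x ^ k / √(8 * π) :=
          sum_le_sum fun k hk ↦ (hterm k).trans <|
            mul_natCast_pow_self_div_factorial_le_of_four_le (not_le.1 (mem_filter.1 hk).2) h0.le
      _ ≤ ∑ k ∈ Ico 4 (K + 1), x ^ k / √(8 * π) :=
          sum_le_sum_of_subset_of_nonneg (fun k ↦ by simp; omega) fun _ _ _ ↦ by positivity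
      _ ≤ x ^ 4 / (1 - x) / √(8 * π) := by
          rw [← sum_div]; gcongr; exact geom_sum_Ico_le_of_lt_one (by positivity) hx1
      _ = 1 / √(8 * π) * x ^ 4 / (1 - x) := by ring
  rw [← sum_filter_add_sum_filter_not _ (· ≤ 3)]
  linarith

/-- For all `α ∈ (0, 1/e)` and positive integer `K`,
`∑_{k=1}^K C(K,k) (α k / K)^k ≤ α + 2α² + (9/2)α³ + (1/√(8π))(eα)⁴/(1-eα)`. -/
theorem simes_sum_bound (K : ℕ) (hK : 0 < K) (α : ℝ) (h0 : 0 < α)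
    (h1 : α < 1 / Real.exp 1) :
    ∑ k ∈ Finset.Icc 1 K, (K.choose k : ℝ) * (α * k / K) ^ k ≤
      α + 2 * α ^ 2 + 9 / 2 * α ^ 3 +
        1 / Real.sqrt (8 * Real.pi) * (Real.exp 1 * α) ^ 4 / (1 - Real.exp 1 * α) :=
  simes_sum_bound_general K α h0 h1
end

section
/- If the random vector (P_1,...,P_K) of standard uniform random variables is weakly negatively dependent, then P(S_K(P) ≤ α) ≤ 1.26·α for all α ∈ (0, 0.1], where S_K is the Simes function. -/
open MeasureTheory


/-!
If `S_K(P) ≤ α`, then for some `k ≤ K` at least `k` of the p-values are `≤ kα/K`. A union bound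
over `k` and over the `k`-subsets, with weak negative dependence and uniformity on each subset,
gives `P(S_K(P) ≤ α) ≤ ∑ₖ C(K,k) (kα/K)^k ≤ ∑ₖ kᵏ/k! · αᵏ`, and for `α ≤ 1/10` the last sum is
at most `α ∑ₖ kᵏ/k! · 10^(1-k) ≤ 1.26 α`.
-/

open Finset
open scoped Nat ENNReal

theorem List.SortedLE.succ_le_countP_of_getElem_le {α : Type*} [LinearOrder α] {l : List α}
    (hl : l.SortedLE) {j : ℕ} (hj : j < l.length) {x : α} (h : l[j] ≤ x) :
    j + 1 ≤ l.countP (· ≤ x) := by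
  have htake : ∀ a ∈ l.take (j + 1), a ≤ x := by
    intro a ha
    obtain ⟨i, hi, rfl⟩ := List.mem_iff_getElem.mp ha
    rw [List.length_take] at hi
    rw [List.getElem_take]
    exact (hl.getElem_le_getElem_of_le (by omega)).trans h
  calc j + 1 = (l.take (j + 1)).countP (· ≤ x) := by
        rw [List.countP_eq_length.mpr (by simpa using htake), List.length_take]; omega
    _ ≤ l.countP (· ≤ x) := (List.take_sublist _ _).countP_le

theorem succ_le_card_filter_of_sort_getD_le {ι α : Type*} [LinearOrder α] [Zero α]
    (A : Finset ι) (p : ι → α) {j : ℕ} (hj : j < #A) {x : α}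
    (h : ((A.val.map p).sort (· ≤ ·)).getD j 0 ≤ x) :
    j + 1 ≤ #(A.filter fun i => p i ≤ x) := by
  set l := (A.val.map p).sort (· ≤ ·)
  have hjl : j < l.length := by simpa [l] using hj
  have hcount : #(A.filter fun i => p i ≤ x) = l.countP (· ≤ x) := by
    rw [← Multiset.coe_countP, Multiset.sort_eq, Multiset.countP_map, card_def]
    rfl
  rw [hcount]
  exact (Multiset.pairwise_sort _ _).sortedLE.succ_le_countP_of_getElem_le hjl
    (by rwa [← List.getD_eq_getElem l 0 hjl])

theorem exists_succ_le_card_filter_of_simesOn_le {ι : Type*} {A : Finset ι} (hA : A.Nonempty)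
    {p : ι → ℝ} {α : ℝ} (h : simesOn A p ≤ α) :
    ∃ j < #A, j + 1 ≤ #(A.filter fun i => p i ≤ (j + 1) * α / #A) := by
  rw [simesOn, dif_pos hA] at h
  obtain ⟨_, hmem, h⟩ : ∃ b ∈ _, b ≤ α := ⟨_, min'_mem _ _, h⟩
  obtain ⟨j, hj, rfl⟩ := mem_image.mp hmem
  have hA0 : (0 : ℝ) < #A := by exact_mod_cast hA.card_pos
  refine ⟨j, mem_range.mp hj, succ_le_card_filter_of_sort_getD_le A p (mem_range.mp hj) ?_⟩
  rw [le_div_iff₀ hA0]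
  rw [div_mul_eq_mul_div, div_le_iff₀ (by positivity)] at h
  linarith

theorem measure_le_card_filter_mem_le_sum {Ω ι : Type*} [MeasurableSpace Ω] [Fintype ι]
    (μ : Measure Ω) (E : ι → Set Ω) [∀ k, DecidablePred (· ∈ E k)] (n : ℕ) :
    μ {ω | n ≤ #{k | ω ∈ E k}} ≤ ∑ A ∈ powersetCard n univ, μ (⋂ k ∈ A, E k) := by
  refine (measure_mono fun ω hω => ?_).trans (measure_biUnion_finset_le _ _)
  obtain ⟨A, hA, hAcard⟩ := exists_subset_card_eq hω
  exact Set.mem_iUnion₂.mpr ⟨A, mem_powersetCard.mpr ⟨subset_univ A, hAcard⟩,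
    Set.mem_iInter₂.mpr fun k hk => (mem_filter.mp (hA hk)).2⟩

theorem measure_le_card_filter_mem_le_choose_mul_pow {Ω ι : Type*} [MeasurableSpace Ω]
    [Fintype ι] (μ : Measure Ω) (E : ι → Set Ω) [∀ k, DecidablePred (· ∈ E k)]
    (hE : ∀ A : Finset ι, μ (⋂ k ∈ A, E k) ≤ ∏ k ∈ A, μ (E k)) {u : ℝ≥0∞}
    (hu : ∀ k, μ (E k) ≤ u) (n : ℕ) :
    μ {ω | n ≤ #{k | ω ∈ E k}} ≤ (Fintype.card ι).choose n * u ^ n :=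
  calc μ {ω | n ≤ #{k | ω ∈ E k}} ≤ ∑ A ∈ powersetCard n univ, μ (⋂ k ∈ A, E k) :=
        measure_le_card_filter_mem_le_sum μ E n
    _ ≤ ∑ A ∈ powersetCard n (univ : Finset ι), u ^ n := by
        refine sum_le_sum fun A hA => (hE A).trans ?_
        rw [← (mem_powersetCard.mp hA).2]
        exact prod_le_pow_card _ _ _ fun k _ => hu k
    _ = (Fintype.card ι).choose n * u ^ n := by
        rw [sum_const, card_powersetCard, card_univ, nsmul_eq_mul]

theorem choose_mul_pow_le_pow_div_factorial {K : ℕ} (hK : K ≠ 0) (m : ℕ) {α : ℝ} (hα : 0 ≤ α) :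
    (K.choose m : ℝ) * (m * α / K) ^ m ≤ (m * α) ^ m / m ! := by
  have hK' : (K : ℝ) ≠ 0 := by exact_mod_cast hK
  calc (K.choose m : ℝ) * (m * α / K) ^ m ≤ K ^ m / m ! * (m * α / K) ^ m := by
        gcongr
        exact Nat.choose_le_pow_div m K
    _ = (m * α) ^ m / m ! := by
        rw [div_mul_eq_mul_div, ← mul_pow, mul_div_cancel₀ _ hK']

theorem sum_range_succ_pow_div_factorial_mul_le (n : ℕ) :
    ∑ j ∈ range n, ((j + 1 : ℕ) : ℝ) ^ (j + 1) / (j + 1)! * (1 / 10) ^ j ≤ 1.26 := by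
  set t : ℕ → ℝ := fun j => ((j + 1 : ℕ) : ℝ) ^ (j + 1) / (j + 1)! * (1 / 10) ^ j
  have ht_nonneg : ∀ j, 0 ≤ t j := fun j => by positivity
  -- `m ^ m / m! ≤ exp m < 3 ^ m`, so the terms decay at least like `(3 / 10) ^ j`
  have ht_geom : ∀ j, t j ≤ 3 * (3 / 10) ^ j := fun j =>
    calc t j ≤ Real.exp 1 ^ (j + 1) * (1 / 10) ^ j := by
          simp only [t]
          gcongr
          rw [← Real.exp_nat_mul, mul_one]
          exact Real.pow_div_factorial_le_exp _ (Nat.cast_nonneg _) _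
      _ ≤ 3 ^ (j + 1) * (1 / 10) ^ j := by gcongr; exact Real.exp_one_lt_three.le
      _ = 3 * (3 / 10) ^ j := by rw [div_eq_mul_one_div 3, mul_pow]; ring
  calc ∑ j ∈ range n, t j ≤ ∑ j ∈ range (8 + n), t j :=
        sum_le_sum_of_subset_of_nonneg (range_subset_range.mpr (by omega))
          fun j _ _ => ht_nonneg j
    _ = ∑ j ∈ range 8, t j + ∑ j ∈ Ico 8 (8 + n), t j :=
        (sum_range_add_sum_Ico t (by omega)).symm
    _ ≤ ∑ j ∈ range 8, t j + ∑ j ∈ Ico 8 (8 + n), 3 * (3 / 10 : ℝ) ^ j := by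
        gcongr with j; exact ht_geom j
    _ ≤ ∑ j ∈ range 8, t j + 3 * ((3 / 10 : ℝ) ^ 8 / (1 - 3 / 10)) := by
        rw [← mul_sum]
        gcongr
        exact geom_sum_Ico_le_of_lt_one (by norm_num) (by norm_num)
    _ ≤ 1.26 := by
        -- the first eight terms sum to `1.25913…`, the tail bound is below `3 · 10⁻⁴`
        simp only [t, sum_range_succ, sum_range_zero, Nat.factorial]
        norm_num

theorem sum_choose_mul_pow_le {α : ℝ} (h0 : 0 ≤ α) (h1 : α ≤ 0.1) (K : ℕ) :
    ∑ j ∈ range K, (K.choose (j + 1) : ℝ) * ((j + 1) * α / K) ^ (j + 1) ≤ 1.26 * α := by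
  have hterm : ∀ j ∈ range K, (K.choose (j + 1) : ℝ) * ((j + 1) * α / K) ^ (j + 1) ≤
      ((j + 1 : ℕ) : ℝ) ^ (j + 1) / (j + 1)! * (1 / 10) ^ j * α := by
    intro j hj
    have hK : K ≠ 0 := by have := mem_range.mp hj; omega
    have hαpow : α ^ (j + 1) ≤ (1 / 10) ^ j * α := by
      rw [pow_succ]; gcongr; linarith
    calc (K.choose (j + 1) : ℝ) * ((j + 1) * α / K) ^ (j + 1)
        ≤ (((j + 1 : ℕ) : ℝ) * α) ^ (j + 1) / (j + 1)! := by
          exact_mod_cast choose_mul_pow_le_pow_div_factorial hK (j + 1) h0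
      _ = ((j + 1 : ℕ) : ℝ) ^ (j + 1) / (j + 1)! * α ^ (j + 1) := by ring
      _ ≤ ((j + 1 : ℕ) : ℝ) ^ (j + 1) / (j + 1)! * ((1 / 10) ^ j * α) := by gcongr
      _ = _ := by ring
  calc _ ≤ ∑ j ∈ range K, ((j + 1 : ℕ) : ℝ) ^ (j + 1) / (j + 1)! * (1 / 10) ^ j * α :=
        sum_le_sum hterm
    _ ≤ 1.26 * α := by
        rw [← sum_mul]
        exact mul_le_mul_of_nonneg_right (sum_range_succ_pow_div_factorial_mul_le K) h0

theorem simes_wnd_mult_bound_small_general {Ω : Type*} [MeasurableSpace Ω] (μ : Measure Ω)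
    (K : ℕ) (hK : 0 < K) (P : Fin K → Ω → ℝ)
    (hunif : ∀ k, ∀ x ∈ Set.Icc (0 : ℝ) 1, μ {ω | P k ω ≤ x} = ENNReal.ofReal x)
    (hwnd : ∀ (A : Finset (Fin K)) (x : ℝ),
      μ (⋂ k ∈ A, {ω | P k ω ≤ x}) ≤ ∏ k ∈ A, μ {ω | P k ω ≤ x})
    (α : ℝ) (h0 : 0 < α) (h1 : α ≤ 0.1) :
    μ {ω | simesOn Finset.univ (fun k => P k ω) ≤ α} ≤ ENNReal.ofReal (1.26 * α) := by
  set x : ℕ → ℝ := fun j => (j + 1) * α / K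
  have hx : ∀ j ∈ range K, x j ∈ Set.Icc 0 1 := fun j hj => by
    have : (j : ℝ) + 1 ≤ K := by exact_mod_cast mem_range.mp hj
    exact ⟨by positivity, (div_le_one (by positivity)).mpr (by nlinarith)⟩
  have hsub : {ω | simesOn univ (fun k => P k ω) ≤ α} ⊆
      ⋃ j ∈ range K, {ω | j + 1 ≤ #{k | ω ∈ {ω | P k ω ≤ x j}}} := fun ω hω => by
    obtain ⟨j, hj, hcount⟩ := exists_succ_le_card_filter_of_simesOn_le
      (univ_nonempty_iff.mpr ⟨⟨0, hK⟩⟩) hω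
    rw [card_univ, Fintype.card_fin] at hj hcount
    exact Set.mem_iUnion₂.mpr ⟨j, mem_range.mpr hj, hcount⟩
  calc μ {ω | simesOn univ (fun k => P k ω) ≤ α}
      ≤ ∑ j ∈ range K, μ {ω | j + 1 ≤ #{k | ω ∈ {ω | P k ω ≤ x j}}} :=
        (measure_mono hsub).trans (measure_biUnion_finset_le _ _)
    _ ≤ ∑ j ∈ range K, (K.choose (j + 1) : ℝ≥0∞) * ENNReal.ofReal (x j) ^ (j + 1) :=
        sum_le_sum fun j hj => by
          simpa using measure_le_card_filter_mem_le_choose_mul_pow μ _ (fun A => hwnd A (x j))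
            (fun k => (hunif k (x j) (hx j hj)).le) (j + 1)
    _ = ENNReal.ofReal (∑ j ∈ range K, (K.choose (j + 1) : ℝ) * x j ^ (j + 1)) := by
        rw [ENNReal.ofReal_sum_of_nonneg fun j hj => by positivity]
        refine sum_congr rfl fun j hj => ?_
        rw [ENNReal.ofReal_mul (by positivity), ← ENNReal.ofReal_pow (hx j hj).1,
          ENNReal.ofReal_natCast]
    _ ≤ ENNReal.ofReal (1.26 * α) :=
        ENNReal.ofReal_le_ofReal (sum_choose_mul_pow_le h0.le h1 K)

/-- If standard uniform p-values `P₁,…,P_K` are weakly negatively dependent, then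
`P(S_K(P) ≤ α) ≤ 1.26 α` for all `α ∈ (0, 0.1]`. -/
theorem simes_wnd_mult_bound_small {Ω : Type*} [MeasurableSpace Ω] (μ : Measure Ω)
    [IsProbabilityMeasure μ] (K : ℕ) (hK : 0 < K) (P : Fin K → Ω → ℝ)
    (hunif : ∀ k, ∀ x ∈ Set.Icc (0 : ℝ) 1, μ {ω | P k ω ≤ x} = ENNReal.ofReal x)
    (hwnd : ∀ (A : Finset (Fin K)) (x : ℝ),
      μ (⋂ k ∈ A, {ω | P k ω ≤ x}) ≤ ∏ k ∈ A, μ {ω | P k ω ≤ x})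
    (α : ℝ) (h0 : 0 < α) (h1 : α ≤ 0.1) :
    μ {ω | simesOn Finset.univ (fun k => P k ω) ≤ α} ≤ ENNReal.ofReal (1.26 * α) :=
  simes_wnd_mult_bound_small_general μ K hK P hunif hwnd α h0 h1
end

section
/- A random vector (X_1,...,X_K) is negatively lower orthant dependent if and only if for all nonnegative decreasing functions φ_1,...,φ_K : ℝ → [0,∞), E[∏_k φ_k(X_k)] ≤ ∏_k E[φ_k(X_k)]. -/
/-!
By the layer-cake formula `φ = ∫₀^∞ 1{t < φ} dt` and Tonelli's theorem, one coordinate at a time,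
the functional inequality for nonnegative antitone `φₖ` reduces to the case where every `φₖ` is
the indicator of a lower set of `ℝ` (the superlevel sets `{t < φₖ}` are lower sets). For lower
sets it is the orthant inequality: exhaust each lower set by an increasing sequence of half-lines
`Iic cₙ` and use continuity of the measure from below. Conversely, indicators of half-lines are
admissible test functions, and for them the functional inequality is the orthant inequality.
-/

open MeasureTheory Set Function

theorem IsLowerSet.exists_monotone_iUnion_Iic {α : Type*} [TopologicalSpace α] [LinearOrder α]
    [OrderTopology α] [SecondCountableTopology α] {L : Set α} (hL : IsLowerSet L)
    (hne : L.Nonempty) : ∃ c : ℕ → α, Monotone c ∧ ⋃ n, Iic (c n) = L := by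
  have : Nonempty L := hne.to_subtype
  have : L.OrdConnected := hL.ordConnected
  obtain ⟨c, hc, htop⟩ := Filter.exists_seq_monotone_tendsto_atTop_atTop L
  refine ⟨fun n => c n, fun m n h => hc h, ?_⟩
  refine (iUnion_subset fun n y hy => hL hy (c n).2).antisymm fun y hy => ?_
  obtain ⟨n, hn⟩ := (htop.eventually_ge_atTop ⟨y, hy⟩).exists
  exact mem_iUnion.2 ⟨n, hn⟩

theorem IsLowerSet.antitone_indicator_one {α : Type*} [Preorder α] {L : Set α}
    (hL : IsLowerSet L) : Antitone (L.indicator (1 : α → ℝ)) := fun a b hab => by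
  by_cases hb : b ∈ L
  · simp [hb, hL hab hb]
  · simp [hb, indicator_nonneg]

theorem ENNReal.ofReal_indicator_one {α : Type*} (s : Set α) (x : α) :
    ENNReal.ofReal (s.indicator 1 x) = s.indicator 1 x := by
  by_cases h : x ∈ s <;> simp [h]

theorem prod_indicator_one_comp {ι Ω R : Type*} [Fintype ι] [CommSemiring R] (X : ι → Ω → ℝ)
    (L : ι → Set ℝ) (ω : Ω) :
    ∏ k, (L k).indicator (1 : ℝ → R) (X k ω) = (⋂ k, X k ⁻¹' L k).indicator 1 ω := by
  simp_rw [← indicator_comp_right, Pi.one_comp, prod_indicator_const_apply]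
  simp

section LayerCake

variable {Ω : Type*} [MeasurableSpace Ω] {μ : Measure Ω}

theorem lintegral_ofReal_mul_le_of_superlevel [SFinite μ] {f : Ω → ℝ} {R : Ω → ENNReal}
    {c : ENNReal} (hf : Measurable f) (hf0 : 0 ≤ f) (hR : Measurable R)
    (h : ∀ t > 0, ∫⁻ ω, {x | t < f x}.indicator R ω ∂μ ≤ μ {x | t < f x} * c) :
    ∫⁻ ω, ENNReal.ofReal (f ω) * R ω ∂μ ≤ (∫⁻ ω, ENNReal.ofReal (f ω) ∂μ) * c := by
  have hlayer (ω : Ω) :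
      ENNReal.ofReal (f ω) * R ω = ∫⁻ t in Ioi 0, {x | t < f x}.indicator R ω := by
    change _ = ∫⁻ t in Ioi 0, (Iio (f ω)).indicator (fun _ => R ω) t
    rw [lintegral_indicator_const measurableSet_Iio, Measure.restrict_apply measurableSet_Iio,
      Iio_inter_Ioi, Real.volume_Ioo, sub_zero, mul_comm]
  have hmeas : Measurable (uncurry fun ω t => {x | t < f x}.indicator R ω) :=
    (hR.comp measurable_fst).indicator (measurableSet_lt measurable_snd (hf.comp measurable_fst))
  have hanti : Antitone fun t => μ {x | t < f x} :=
    fun s t hst => measure_mono fun x hx => hst.trans_lt hx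
  calc ∫⁻ ω, ENNReal.ofReal (f ω) * R ω ∂μ
      = ∫⁻ ω, (∫⁻ t in Ioi 0, {x | t < f x}.indicator R ω) ∂μ := lintegral_congr hlayer
    _ = ∫⁻ t in Ioi 0, ∫⁻ ω, {x | t < f x}.indicator R ω ∂μ :=
      lintegral_lintegral_swap hmeas.aemeasurable
    _ ≤ ∫⁻ t in Ioi 0, μ {x | t < f x} * c := setLIntegral_mono' measurableSet_Ioi h
    _ = (∫⁻ ω, ENNReal.ofReal (f ω) ∂μ) * c := by
      rw [lintegral_mul_const c hanti.measurable,
        lintegral_eq_lintegral_meas_lt μ (ae_of_all _ hf0) hf.aemeasurable]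

end LayerCake

section ProductInequality

variable {ι Ω : Type*} [Fintype ι] [MeasurableSpace Ω] {μ : Measure Ω} {X : ι → Ω → ℝ}

theorem measure_iInter_preimage_le_prod_of_isLowerSet
    (h : ∀ x : ι → ℝ, μ (⋂ k, {ω | X k ω ≤ x k}) ≤ ∏ k, μ {ω | X k ω ≤ x k})
    {L : ι → Set ℝ} (hL : ∀ k, IsLowerSet (L k)) :
    μ (⋂ k, X k ⁻¹' L k) ≤ ∏ k, μ (X k ⁻¹' L k) := by
  by_cases hne : ∀ k, (L k).Nonempty
  · choose c hc hcL using fun k => (hL k).exists_monotone_iUnion_Iic (hne k)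
    have hcover : ⋂ k, X k ⁻¹' L k = ⋃ n, ⋂ k, {ω | X k ω ≤ c k n} := by
      simp_rw [← hcL, preimage_iUnion]
      exact (iUnion_iInter_of_monotone fun k m n h =>
        preimage_mono (f := X k) (Iic_subset_Iic.2 (hc k h))).symm
    rw [hcover, Monotone.measure_iUnion fun m n h => iInter_mono fun k ω hω => hω.trans (hc k h)]
    refine iSup_le fun n => (h _).trans (Finset.prod_le_prod' fun k _ => measure_mono ?_)
    exact preimage_mono (hcL k ▸ subset_iUnion (fun n => Iic (c k n)) n)
  · obtain ⟨j, hj⟩ := not_forall.1 hne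
    have hempty : ⋂ k, X k ⁻¹' L k = ∅ :=
      subset_empty_iff.1 fun ω hω => hj ⟨X j ω, mem_iInter.1 hω j⟩
    simp [hempty]

/-- The functional inequality in `ℝ≥0∞`, where it needs no integrability side conditions. -/
def LintegralProdLeProd (μ : Measure Ω) (X : ι → Ω → ℝ) (ψ : ι → ℝ → ℝ) : Prop :=
  ∫⁻ ω, ∏ k, ENNReal.ofReal (ψ k (X k ω)) ∂μ ≤ ∏ k, ∫⁻ ω, ENNReal.ofReal (ψ k (X k ω)) ∂μ

theorem lintegralProdLeProd_indicator_iff (hX : ∀ k, Measurable (X k)) {L : ι → Set ℝ}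
    (hL : ∀ k, MeasurableSet (L k)) :
    LintegralProdLeProd μ X (fun k => (L k).indicator 1) ↔
      μ (⋂ k, X k ⁻¹' L k) ≤ ∏ k, μ (X k ⁻¹' L k) := by
  have hpre : ∀ k, MeasurableSet (X k ⁻¹' L k) := fun k => hX k (hL k)
  simp_rw [LintegralProdLeProd, ENNReal.ofReal_indicator_one, prod_indicator_one_comp,
    lintegral_indicator_one (MeasurableSet.iInter hpre), ← indicator_comp_right, Pi.one_comp]
  simp only [lintegral_indicator_one, hpre]

theorem integral_prod_le_prod_iff {φ : ι → ℝ → ℝ} (hφ0 : ∀ k t, 0 ≤ φ k t)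
    (hint : ∀ k, Integrable (fun ω => φ k (X k ω)) μ)
    (hprod : Integrable (fun ω => ∏ k, φ k (X k ω)) μ) :
    ∫ ω, ∏ k, φ k (X k ω) ∂μ ≤ ∏ k, ∫ ω, φ k (X k ω) ∂μ ↔ LintegralProdLeProd μ X φ := by
  rw [← ENNReal.ofReal_le_ofReal_iff
      (Finset.prod_nonneg fun k _ => integral_nonneg fun ω => hφ0 k _),
    ofReal_integral_eq_lintegral_ofReal hprod
      (ae_of_all _ fun ω => Finset.prod_nonneg fun k _ => hφ0 k _),
    ENNReal.ofReal_prod_of_nonneg fun k _ => integral_nonneg fun ω => hφ0 k _]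
  simp_rw [ENNReal.ofReal_prod_of_nonneg fun k _ => hφ0 k _]
  rw [Finset.prod_congr rfl fun k _ =>
    ofReal_integral_eq_lintegral_ofReal (hint k) (ae_of_all _ fun ω => hφ0 k _)]
  rfl

theorem LintegralProdLeProd.of_update_indicator [DecidableEq ι] [SFinite μ]
    (hX : ∀ k, Measurable (X k)) {ψ : ι → ℝ → ℝ} (hψ : ∀ k, Measurable (ψ k)) {j : ι}
    (hψj : 0 ≤ ψ j)
    (h : ∀ t > 0, LintegralProdLeProd μ X (update ψ j ({u | t < ψ j u}.indicator 1))) :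
    LintegralProdLeProd μ X ψ := by
  set R : Ω → ENNReal := fun ω => ∏ k ∈ {j}ᶜ, ENNReal.ofReal (ψ k (X k ω))
  set c := ∏ k ∈ {j}ᶜ, ∫⁻ ω, ENNReal.ofReal (ψ k (X k ω)) ∂μ
  have hsplit (g : ℝ → ℝ) (F : ι → (ℝ → ℝ) → ENNReal) :
      ∏ k, F k (update ψ j g k) = F j g * ∏ k ∈ {j}ᶜ, F k (ψ k) := by
    rw [Fintype.prod_eq_mul_prod_compl j, update_self]
    exact congrArg _ (Finset.prod_congr rfl fun k hk => by rw [update_of_ne (by simpa using hk)])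
  have hupdate (g : ℝ → ℝ) : LintegralProdLeProd μ X (update ψ j g) ↔
      ∫⁻ ω, ENNReal.ofReal (g (X j ω)) * R ω ∂μ ≤ (∫⁻ ω, ENNReal.ofReal (g (X j ω)) ∂μ) * c := by
    have h1 := fun ω => hsplit g fun k φ => ENNReal.ofReal (φ (X k ω))
    have h2 := hsplit g fun k φ => ∫⁻ ω, ENNReal.ofReal (φ (X k ω)) ∂μ
    rw [LintegralProdLeProd, lintegral_congr h1, h2]
  have hR : Measurable R := Finset.measurable_prod _ fun k _ => ((hψ k).comp (hX k)).ennreal_ofReal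
  rw [← update_eq_self j ψ, hupdate]
  refine lintegral_ofReal_mul_le_of_superlevel ((hψ j).comp (hX j)) (fun ω => hψj _) hR
    fun t ht => ?_
  have := (hupdate _).1 (h t ht)
  have hmeas : MeasurableSet (X j ⁻¹' {u | t < ψ j u}) :=
    hX j (measurableSet_lt measurable_const (hψ j))
  simp only [ENNReal.ofReal_indicator_one, ← indicator_comp_right, Pi.one_comp,
    ← indicator_mul_left, Pi.one_apply, one_mul, lintegral_indicator_one hmeas] at this
  exact this

theorem lintegralProdLeProd_of_isLowerSet [SFinite μ] (hX : ∀ k, Measurable (X k))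
    (hL : ∀ L : ι → Set ℝ, (∀ k, IsLowerSet (L k)) →
      μ (⋂ k, X k ⁻¹' L k) ≤ ∏ k, μ (X k ⁻¹' L k))
    (s : Finset ι) {ψ : ι → ℝ → ℝ} (hψ : ∀ k, Antitone (ψ k)) (hψ0 : ∀ k, 0 ≤ ψ k)
    (hψs : ∀ k ∉ s, ∃ L, IsLowerSet L ∧ ψ k = L.indicator 1) : LintegralProdLeProd μ X ψ := by
  classical
  induction s using Finset.induction_on generalizing ψ with
  | empty =>
    choose L hLlow hψL using fun k => hψs k (Finset.notMem_empty k)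
    obtain rfl : ψ = fun k => (L k).indicator 1 := funext hψL
    exact (lintegralProdLeProd_indicator_iff hX fun k => (hLlow k).ordConnected.measurableSet).2
      (hL L hLlow)
  | insert j s hj ih =>
    refine .of_update_indicator hX (fun k => (hψ k).measurable) (hψ0 j) fun t _ => ?_
    have hlow : IsLowerSet {u | t < ψ j u} := fun a b hab ha => ha.trans_le (hψ j hab)
    refine ih ((forall_update_iff ψ fun _ g => Antitone g).2
        ⟨hlow.antitone_indicator_one, fun k _ => hψ k⟩)
      ((forall_update_iff ψ fun _ g => 0 ≤ g).2
        ⟨indicator_nonneg fun _ _ => zero_le_one, fun k _ => hψ0 k⟩)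
      ((forall_update_iff ψ fun k g => k ∉ s → ∃ L, IsLowerSet L ∧ g = L.indicator 1).2
        ⟨fun _ => ⟨_, hlow, rfl⟩, fun k hkj hks => hψs k (by simp [hks, hkj])⟩)

end ProductInequality

/-- A random vector is negatively lower orthant dependent iff for all nonnegative
decreasing functions `φ₁,…,φ_K`, `E[∏ φₖ(Xₖ)] ≤ ∏ E[φₖ(Xₖ)]` (expectations assumed finite). -/
theorem nlod_iff_functional {Ω : Type*} [MeasurableSpace Ω] (μ : Measure Ω)
    [IsProbabilityMeasure μ] (K : ℕ) (X : Fin K → Ω → ℝ)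
    (hX : ∀ k, Measurable (X k)) :
    (∀ x : Fin K → ℝ,
      μ (⋂ k, {ω | X k ω ≤ x k}) ≤ ∏ k, μ {ω | X k ω ≤ x k}) ↔
    (∀ φ : Fin K → ℝ → ℝ, (∀ k, Antitone (φ k)) → (∀ k t, 0 ≤ φ k t) →
      (∀ k, Integrable (fun ω => φ k (X k ω)) μ) →
      Integrable (fun ω => ∏ k, φ k (X k ω)) μ →
      ∫ ω, ∏ k, φ k (X k ω) ∂μ ≤ ∏ k, ∫ ω, φ k (X k ω) ∂μ) := by
  refine ⟨fun hNLOD φ hφ hφ0 hint hprod => ?_, fun hfun x => ?_⟩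
  · rw [integral_prod_le_prod_iff hφ0 hint hprod]
    exact lintegralProdLeProd_of_isLowerSet hX
      (fun L hL => measure_iInter_preimage_le_prod_of_isLowerSet hNLOD hL) Finset.univ hφ hφ0
      (by simp)
  · set φ : Fin K → ℝ → ℝ := fun k => (Iic (x k)).indicator 1
    have hmeas (k : Fin K) : MeasurableSet (X k ⁻¹' Iic (x k)) := hX k measurableSet_Iic
    have hint (k : Fin K) : Integrable (fun ω => φ k (X k ω)) μ := by
      simp only [φ, ← indicator_comp_right, Pi.one_comp]
      exact (integrable_const 1).indicator (hmeas k)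
    have hprod : Integrable (fun ω => ∏ k, φ k (X k ω)) μ := by
      simp only [φ, prod_indicator_one_comp]
      exact (integrable_const 1).indicator (MeasurableSet.iInter hmeas)
    have hφ0 (k : Fin K) (t : ℝ) : 0 ≤ φ k t := indicator_nonneg (fun _ _ => zero_le_one) t
    have := hfun φ (fun k => (isLowerSet_Iic (x k)).antitone_indicator_one) hφ0 hint hprod
    rw [integral_prod_le_prod_iff hφ0 hint hprod] at this
    exact (lintegralProdLeProd_indicator_iff hX fun k => measurableSet_Iic).1 this
end

section
/- If e-values E_1,...,E_K are negatively upper orthant dependent, then for each k ∈ {1,...,K}, the product ∏_{i=1}^k E_i is also an e-value, i.e., it is nonnegative and has expectation at most 1. -/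
open MeasureTheory Set
open scoped ENNReal

/-! Each `E i ω ≥ 0` is the Lebesgue measure of `(0, E i ω)`, so `∏ᵢ E i ω` is the measure of the
box `∏ᵢ (0, E i ω)`. By Tonelli, `𝔼[∏ᵢ Eᵢ] = ∫ P(⋂ᵢ {xᵢ < Eᵢ}) dx` over the positive orthant; negative
upper orthant dependence bounds the integrand by `∏ᵢ P(xᵢ < Eᵢ)`, whose integral factorizes into
`∏ᵢ ∫₀^∞ P(Eᵢ > t) dt = ∏ᵢ 𝔼[Eᵢ] ≤ 1`. A sub-family inherits the dependence: give the remaining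
coordinates a negative threshold, so that their events are sure. -/

theorem lintegral_fin_pi_prod {n : ℕ} {α : Fin n → Type*} [∀ i, MeasurableSpace (α i)]
    (ν : ∀ i, Measure (α i)) [∀ i, SigmaFinite (ν i)] {g : ∀ i, α i → ℝ≥0∞}
    (hg : ∀ i, Measurable (g i)) :
    ∫⁻ x, ∏ i, g i (x i) ∂Measure.pi ν = ∏ i, ∫⁻ t, g i t ∂ν i := by
  induction n with
  | zero => simp
  | succ n ih =>
    have hF : Measurable fun x : ∀ i, α i => ∏ i, g i (x i) := by fun_prop
    have hG : Measurable fun y : ∀ j : Fin n, α j.succ => ∏ j, g j.succ (y j) :=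
      Finset.measurable_prod _ fun j _ => (hg j.succ).comp (measurable_pi_apply j)
    rw [← (measurePreserving_piFinSuccAbove ν 0).symm.lintegral_comp hF, Fin.prod_univ_succ,
      ← ih (fun j => ν j.succ) (fun j => hg j.succ), ← lintegral_prod_mul (hg 0).aemeasurable
        hG.aemeasurable]
    refine lintegral_congr fun p => ?_
    rw [Fin.prod_univ_succ]
    rfl

theorem lintegral_pi_prod {ι : Type*} [Fintype ι] {α : ι → Type*} [∀ i, MeasurableSpace (α i)]
    (ν : ∀ i, Measure (α i)) [∀ i, SigmaFinite (ν i)] {g : ∀ i, α i → ℝ≥0∞}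
    (hg : ∀ i, Measurable (g i)) :
    ∫⁻ x, ∏ i, g i (x i) ∂Measure.pi ν = ∏ i, ∫⁻ t, g i t ∂ν i := by
  let e := (Fintype.equivFin ι).symm
  have hF : Measurable fun x : ∀ i, α i => ∏ i, g i (x i) := by fun_prop
  rw [← (measurePreserving_piCongrLeft ν e).lintegral_comp hF, ← e.prod_comp,
    ← lintegral_fin_pi_prod (fun j => ν (e j)) (fun j => hg (e j))]
  refine lintegral_congr fun y => ?_
  rw [← e.prod_comp]
  simp_rw [MeasurableEquiv.piCongrLeft_apply_apply]

theorem Real.volume_restrict_Ioi_zero_Iio (a : ℝ) :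
    volume.restrict (Ioi 0) (Iio a) = ENNReal.ofReal a := by
  rw [Measure.restrict_apply measurableSet_Iio, Iio_inter_Ioi, Real.volume_Ioo, sub_zero]

def NegUpperOrthantDependent {Ω ι : Type*} [MeasurableSpace Ω] [Fintype ι] (μ : Measure Ω)
    (E : ι → Ω → ℝ) : Prop :=
  ∀ x : ι → ℝ, μ (⋂ i, {ω | x i < E i ω}) ≤ ∏ i, μ {ω | x i < E i ω}

namespace NegUpperOrthantDependent

variable {Ω ι : Type*} [MeasurableSpace Ω] [Fintype ι] {μ : Measure Ω} {E : ι → Ω → ℝ}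

theorem subtype [IsZeroOrProbabilityMeasure μ] (hE : NegUpperOrthantDependent μ E)
    (hnn : ∀ i ω, 0 ≤ E i ω) (s : Finset ι) :
    NegUpperOrthantDependent μ fun i : s => E i := by
  classical
  intro x
  let y : ι → ℝ := fun i => if h : i ∈ s then x ⟨i, h⟩ else -1
  have hy_out : ∀ i ∉ s, ∀ ω, y i < E i ω := fun i hi ω => by
    simpa [y, hi] using neg_one_lt_zero.trans_le (hnn i ω)
  have hinter : ⋂ i : s, {ω | x i < E i ω} = ⋂ i, {ω | y i < E i ω} := by
    ext ω
    simp only [mem_iInter, mem_ofPred_eq, Subtype.forall]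
    refine ⟨fun h i => ?_, fun h i hi => by simpa [y, hi] using h i⟩
    by_cases hi : i ∈ s
    · simpa [y, hi] using h i hi
    · exact hy_out i hi ω
  calc μ (⋂ i : s, {ω | x i < E i ω}) = μ (⋂ i, {ω | y i < E i ω}) := by rw [hinter]
    _ ≤ ∏ i, μ {ω | y i < E i ω} := hE y
    _ ≤ ∏ i ∈ s, μ {ω | y i < E i ω} :=
        Finset.prod_le_prod_of_subset_of_le_one' s.subset_univ fun _ _ _ => prob_le_one
    _ = ∏ i : s, μ {ω | x i < E i ω} := by
        rw [← Finset.prod_coe_sort]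
        simp [y]

theorem lintegral_prod_le [SFinite μ] (hE : NegUpperOrthantDependent μ E)
    (hmeas : ∀ i, Measurable (E i)) (hnn : ∀ i ω, 0 ≤ E i ω) :
    ∫⁻ ω, ∏ i, ENNReal.ofReal (E i ω) ∂μ ≤ ∏ i, ∫⁻ ω, ENNReal.ofReal (E i ω) ∂μ := by
  set ν := Measure.pi fun _ : ι => volume.restrict (Ioi (0 : ℝ))
  set S := {p : Ω × (ι → ℝ) | ∀ i, p.2 i < E i p.1}
  have hS : MeasurableSet S := by
    simp only [S, ofPred_forall]
    exact .iInter fun i => measurableSet_lt (by fun_prop) (by fun_prop)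
  have htail : ∀ i, Measurable fun t : ℝ => μ {ω | t < E i ω} := fun i =>
    Antitone.measurable fun a b hab => measure_mono fun ω hω => hab.trans_lt hω
  calc ∫⁻ ω, ∏ i, ENNReal.ofReal (E i ω) ∂μ = ∫⁻ ω, ν {x | (ω, x) ∈ S} ∂μ := by
        refine lintegral_congr fun ω => ?_
        have hslice : {x | (ω, x) ∈ S} = univ.pi fun i => Iio (E i ω) := by ext; simp [S]
        simp_rw [hslice, ν, Measure.pi_pi, Real.volume_restrict_Ioi_zero_Iio]
    _ = ∫⁻ x, μ {ω | (ω, x) ∈ S} ∂ν :=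
        (Measure.prod_apply hS).symm.trans (Measure.prod_apply_symm hS)
    _ ≤ ∫⁻ x, ∏ i, μ {ω | x i < E i ω} ∂ν :=
        lintegral_mono fun x => by
          have hslice : {ω | (ω, x) ∈ S} = ⋂ i, {ω | x i < E i ω} := by ext; simp [S]
          exact hslice ▸ hE x
    _ = ∏ i, ∫⁻ t in Ioi 0, μ {ω | t < E i ω} := lintegral_pi_prod _ htail
    _ = ∏ i, ∫⁻ ω, ENNReal.ofReal (E i ω) ∂μ := by
        simp_rw [lintegral_eq_lintegral_meas_lt μ (.of_forall (hnn _)) (hmeas _).aemeasurable]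

theorem lintegral_finset_prod_le [IsZeroOrProbabilityMeasure μ]
    (hE : NegUpperOrthantDependent μ E) (hmeas : ∀ i, Measurable (E i)) (hnn : ∀ i ω, 0 ≤ E i ω)
    (s : Finset ι) :
    ∫⁻ ω, ∏ i ∈ s, ENNReal.ofReal (E i ω) ∂μ ≤ ∏ i ∈ s, ∫⁻ ω, ENNReal.ofReal (E i ω) ∂μ := by
  simp_rw [← Finset.prod_coe_sort s]
  exact (hE.subtype hnn s).lintegral_prod_le (fun i => hmeas i) (fun i => hnn i)

end NegUpperOrthantDependent

/-- If e-values `E₁,…,E_K` are negatively upper orthant dependent, then for each `k`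
the product `∏_{i ≤ k} Eᵢ` is also an e-value (nonnegative with expectation at most 1). -/
theorem nuod_evalues_product {Ω : Type*} [MeasurableSpace Ω] (μ : Measure Ω)
    [IsProbabilityMeasure μ] (K : ℕ) (E : Fin K → Ω → ℝ)
    (hmeas : ∀ i, Measurable (E i)) (hnn : ∀ i ω, 0 ≤ E i ω)
    (hev : ∀ i, ∫⁻ ω, ENNReal.ofReal (E i ω) ∂μ ≤ 1)
    (hnuod : ∀ x : Fin K → ℝ,
      μ (⋂ i, {ω | x i < E i ω}) ≤ ∏ i, μ {ω | x i < E i ω}) :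
    ∀ k : Fin K, (∀ ω, 0 ≤ ∏ i ∈ Finset.Iic k, E i ω) ∧
      ∫⁻ ω, ∏ i ∈ Finset.Iic k, ENNReal.ofReal (E i ω) ∂μ ≤ 1 := by
  intro k
  refine ⟨fun ω => Finset.prod_nonneg fun i _ => hnn i ω, ?_⟩
  calc ∫⁻ ω, ∏ i ∈ Finset.Iic k, ENNReal.ofReal (E i ω) ∂μ
      ≤ ∏ i ∈ Finset.Iic k, ∫⁻ ω, ENNReal.ofReal (E i ω) ∂μ :=
        NegUpperOrthantDependent.lintegral_finset_prod_le hnuod hmeas hnn _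
    _ ≤ 1 := Finset.prod_le_one' fun i _ => hev i
end

section
/- Suppose X_1,...,X_n are random variables such that for any nonnegative increasing functions φ_1,...,φ_n, E[∏_i φ_i(X_i)] ≤ ∏_i E[φ_i(X_i)], and suppose each X_i has mean μ_i and satisfies E[exp(λ(X_i − μ_i))] ≤ exp(ψ_i(λ)·v_i) for all λ in the domain of ψ_i. Then for any λ_1,...,λ_n ≥ 0 in the respective domains, exp(Σ_i λ_i(X_i − μ_i) − Σ_i ψ_i(λ_i)·v_i) is an e-value (nonnegative with expectation at most 1). -/
/-!
Each `exp (λᵢ (t - μᵢ))` with `λᵢ ≥ 0` is a nonnegative increasing function of `t`, so negative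
dependence bounds the moment generating function of `∑ λᵢ (Xᵢ - μᵢ)` by the product of the
individual ones, and the sub-`ψ` bounds multiply to `exp (∑ ψᵢ(λᵢ) vᵢ)`.
-/

open MeasureTheory

lemma Real.monotone_exp_mul_sub {l : ℝ} (hl : 0 ≤ l) (a : ℝ) :
    Monotone fun t => Real.exp (l * (t - a)) :=
  fun _ _ hst => Real.exp_le_exp.mpr (mul_le_mul_of_nonneg_left (by linarith) hl)

lemma ENNReal.ofReal_exp_sum {ι : Type*} (s : Finset ι) (f : ι → ℝ) :
    ENNReal.ofReal (Real.exp (∑ i ∈ s, f i)) = ∏ i ∈ s, ENNReal.ofReal (Real.exp (f i)) := by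
  rw [Real.exp_sum, ENNReal.ofReal_prod_of_nonneg fun i _ => (Real.exp_pos _).le]

section

variable {Ω : Type*} [MeasurableSpace Ω] {μ : Measure Ω}

lemma lintegral_ofReal_exp_sub_le_one {Y : Ω → ℝ} {c : ℝ}
    (h : ∫⁻ ω, ENNReal.ofReal (Real.exp (Y ω)) ∂μ ≤ ENNReal.ofReal (Real.exp c)) :
    ∫⁻ ω, ENNReal.ofReal (Real.exp (Y ω - c)) ∂μ ≤ 1 := by
  have hsplit : ∀ ω, ENNReal.ofReal (Real.exp (Y ω - c)) =
      ENNReal.ofReal (Real.exp (Y ω)) * ENNReal.ofReal (Real.exp (-c)) := fun ω => by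
    rw [sub_eq_add_neg, Real.exp_add, ENNReal.ofReal_mul (Real.exp_pos _).le]
  calc ∫⁻ ω, ENNReal.ofReal (Real.exp (Y ω - c)) ∂μ
      = (∫⁻ ω, ENNReal.ofReal (Real.exp (Y ω)) ∂μ) * ENNReal.ofReal (Real.exp (-c)) := by
        simp_rw [hsplit]
        exact lintegral_mul_const' _ _ ENNReal.ofReal_ne_top
    _ ≤ ENNReal.ofReal (Real.exp c) * ENNReal.ofReal (Real.exp (-c)) := by gcongr
    _ = 1 := by
        rw [← ENNReal.ofReal_mul (Real.exp_pos _).le, ← Real.exp_add, add_neg_cancel,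
          Real.exp_zero, ENNReal.ofReal_one]

lemma lintegral_ofReal_exp_sum_le {ι : Type*} [Fintype ι] {f : ι → Ω → ℝ} {c : ι → ℝ}
    (hdep : ∫⁻ ω, ∏ i, ENNReal.ofReal (Real.exp (f i ω)) ∂μ ≤
      ∏ i, ∫⁻ ω, ENNReal.ofReal (Real.exp (f i ω)) ∂μ)
    (hmgf : ∀ i, ∫⁻ ω, ENNReal.ofReal (Real.exp (f i ω)) ∂μ ≤ ENNReal.ofReal (Real.exp (c i))) :
    ∫⁻ ω, ENNReal.ofReal (Real.exp (∑ i, f i ω)) ∂μ ≤ ENNReal.ofReal (Real.exp (∑ i, c i)) := by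
  simp_rw [ENNReal.ofReal_exp_sum]
  exact hdep.trans (Finset.prod_le_prod' fun i _ => hmgf i)

end

theorem chernoff_evalue_general {Ω : Type*} [MeasurableSpace Ω] (μ : Measure Ω)
    (n : ℕ) (X : Fin n → Ω → ℝ)
    (ψ : Fin n → ℝ → ℝ) (dom : Fin n → Set ℝ) (v m : Fin n → ℝ)
    (hfun : ∀ φ : Fin n → ℝ → ℝ, (∀ i, Monotone (φ i)) → (∀ i t, 0 ≤ φ i t) →
      ∫⁻ ω, ∏ i, ENNReal.ofReal (φ i (X i ω)) ∂μ ≤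
        ∏ i, ∫⁻ ω, ENNReal.ofReal (φ i (X i ω)) ∂μ)
    (hsub : ∀ i, ∀ l ∈ dom i,
      ∫⁻ ω, ENNReal.ofReal (Real.exp (l * (X i ω - m i))) ∂μ ≤
        ENNReal.ofReal (Real.exp (ψ i l * v i)))
    (lam : Fin n → ℝ) (hlam0 : ∀ i, 0 ≤ lam i) (hlamdom : ∀ i, lam i ∈ dom i) :
    ∫⁻ ω, ENNReal.ofReal
        (Real.exp (∑ i, lam i * (X i ω - m i) - ∑ i, ψ i (lam i) * v i)) ∂μ ≤ 1 := by
  refine lintegral_ofReal_exp_sub_le_one (lintegral_ofReal_exp_sum_le ?_ ?_)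
  · exact hfun (fun i t => Real.exp (lam i * (t - m i)))
      (fun i => Real.monotone_exp_mul_sub (hlam0 i) (m i)) (fun _ _ => (Real.exp_pos _).le)
  · exact fun i => hsub i (lam i) (hlamdom i)

/-- Chernoff e-variables: if `X₁,…,Xₙ` satisfy the functional form of negative upper
orthant dependence and each `Xᵢ` is `vᵢ`-sub-`ψᵢ` with mean `μᵢ`, then
`exp(∑ λᵢ(Xᵢ − μᵢ) − ∑ ψᵢ(λᵢ) vᵢ)` is an e-value for nonnegative `λᵢ` in the domains. -/
theorem chernoff_evalue {Ω : Type*} [MeasurableSpace Ω] (μ : Measure Ω)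
    [IsProbabilityMeasure μ] (n : ℕ) (X : Fin n → Ω → ℝ)
    (ψ : Fin n → ℝ → ℝ) (dom : Fin n → Set ℝ) (v m : Fin n → ℝ)
    (hint : ∀ i, Integrable (X i) μ) (hmean : ∀ i, ∫ ω, X i ω ∂μ = m i)
    (hfun : ∀ φ : Fin n → ℝ → ℝ, (∀ i, Monotone (φ i)) → (∀ i t, 0 ≤ φ i t) →
      ∫⁻ ω, ∏ i, ENNReal.ofReal (φ i (X i ω)) ∂μ ≤
        ∏ i, ∫⁻ ω, ENNReal.ofReal (φ i (X i ω)) ∂μ)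
    (hsub : ∀ i, ∀ l ∈ dom i,
      ∫⁻ ω, ENNReal.ofReal (Real.exp (l * (X i ω - m i))) ∂μ ≤
        ENNReal.ofReal (Real.exp (ψ i l * v i)))
    (lam : Fin n → ℝ) (hlam0 : ∀ i, 0 ≤ lam i) (hlamdom : ∀ i, lam i ∈ dom i) :
    ∫⁻ ω, ENNReal.ofReal
        (Real.exp (∑ i, lam i * (X i ω - m i) - ∑ i, ψ i (lam i) * v i)) ∂μ ≤ 1 :=
  chernoff_evalue_general μ n X ψ dom v m hfun hsub lam hlam0 hlamdom
end

section
/- Let X_1,...,X_K be independent random variables with X_{K+1} := X_1, and let f_1,...,f_K : ℝ² → [0,∞) be component-wise increasing functions. Then E[∏_{i=1}^K f_i(X_i, −X_{i+1})] ≤ ∏_{i=1}^K E[f_i(X_i, −X_{i+1})]. -/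
/-!
The functions `f i` need not be measurable, so `(x, y) ↦ ofReal (f i x y)` is first replaced by a
measurable function, monotone in both variables, that agrees with it almost everywhere for the
joint law of `(X i, -X (i + 1))`, which is the product of the marginals. Take the supremum of `f i`
over the points below `(x, y)` of a countable set `D₁ ×ˢ D₂`, where `Dⱼ` is `ℚ` together with the
atoms of the `j`-th marginal. Where this falls short of `f i` the points form countably many
singletons with a null coordinate plus a set that contains no two points strictly increasing in
both coordinates and whose coordinates are not atoms; the vertical slices of such a set pairwise
meet in at most one point, so only countably many of them carry mass.

With `Φ i a b` monotone in `a` and antitone in `b`, integrate out the coordinates of the product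
space one at a time. The coordinate `x₀` enters only through `Φ 0 x₀ x₁`, increasing in `x₀`, and
`Φ (K - 1) x_{K-1} x₀`, decreasing in `x₀`, so Chebyshev's inequality for oppositely monotone
functions bounds their joint integral by the product of the integrals. This opens the cycle into a
path, which the same argument then shortens one vertex at a time.
-/

open MeasureTheory Set Function
open scoped ENNReal

theorem ENNReal.mul_add_mul_le_mul_add_mul {a b c d : ℝ≥0∞} (hab : a ≤ b) (hcd : c ≤ d) :
    a * d + b * c ≤ a * c + b * d := by
  obtain ⟨e, rfl⟩ := exists_add_of_le hcd
  calc a * (c + e) + b * c = a * c + (a * e + b * c) := by ring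
    _ ≤ a * c + (b * e + b * c) := by gcongr
    _ = a * c + b * (c + e) := by ring

/-- **Chebyshev's integral inequality**. -/
theorem Antivary.lintegral_mul_le {ι : Type*} [MeasurableSpace ι] {ν : Measure ι}
    [IsProbabilityMeasure ν] {g h : ι → ℝ≥0∞} (hgh : Antivary g h) (hg : Measurable g)
    (hh : Measurable h) : ∫⁻ x, g x * h x ∂ν ≤ (∫⁻ x, g x ∂ν) * ∫⁻ x, h x ∂ν := by
  have rearrangement (x y : ι) : g x * h x + g y * h y ≤ g x * h y + g y * h x := by
    rcases lt_or_ge (h x) (h y) with hxy | hyx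
    · simpa [add_comm] using ENNReal.mul_add_mul_le_mul_add_mul (hgh hxy) hxy.le
    · rcases hyx.lt_or_eq with hyx | hyx
      · simpa [add_comm] using ENNReal.mul_add_mul_le_mul_add_mul (hgh hyx) hyx.le
      · simp [hyx]
  have hgh_meas : Measurable fun x => g x * h x := hg.mul hh
  suffices 2 * ∫⁻ x, g x * h x ∂ν ≤ 2 * ((∫⁻ x, g x ∂ν) * ∫⁻ x, h x ∂ν) from
    (ENNReal.mul_le_mul_iff_right two_ne_zero ENNReal.ofNat_ne_top).mp this
  calc 2 * ∫⁻ x, g x * h x ∂ν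
      = ∫⁻ x, ∫⁻ y, (g x * h x + g y * h y) ∂ν ∂ν := by
        simp_rw [lintegral_add_right _ hgh_meas, lintegral_const, measure_univ, mul_one,
          lintegral_add_left hgh_meas, lintegral_const, measure_univ, mul_one, two_mul]
    _ ≤ ∫⁻ x, ∫⁻ y, (g x * h y + g y * h x) ∂ν ∂ν :=
        lintegral_mono fun x => lintegral_mono fun y => rearrangement x y
    _ = 2 * ((∫⁻ x, g x ∂ν) * ∫⁻ x, h x ∂ν) := by
        simp_rw [lintegral_add_left (hh.const_mul _), lintegral_const_mul _ hh,
          lintegral_mul_const _ hg, lintegral_add_left (hg.mul_const _), lintegral_mul_const _ hg,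
          lintegral_const_mul _ hh]
        ring

theorem lintegral_pi_fin_succ {α : Type*} [MeasurableSpace α] {n : ℕ}
    (ν : Fin (n + 1) → Measure α) [∀ i, SigmaFinite (ν i)] {F : (Fin (n + 1) → α) → ℝ≥0∞}
    (hF : Measurable F) :
    ∫⁻ x, F x ∂Measure.pi ν =
      ∫⁻ y, ∫⁻ a, F (Fin.cons a y) ∂ν 0 ∂Measure.pi fun j => ν j.succ := by
  have e := (measurePreserving_piFinSuccAbove ν 0).symm
  rw [← e.lintegral_comp hF]
  refine (lintegral_prod_symm' _ (hF.comp e.measurable)).trans ?_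
  simp [MeasurableEquiv.piFinSuccAbove_symm_apply, Fin.insertNthEquiv_zero, Fin.consEquiv]

theorem Fin.prod_univ_cycle {M : Type*} [CommMonoid M] {n : ℕ}
    (ψ : Fin (n + 2) → Fin (n + 2) → M) :
    ∏ i, ψ i (i + 1) =
      ψ 0 1 * (∏ j : Fin n, ψ j.castSucc.succ j.succ.succ) * ψ (Fin.last (n + 1)) 0 := by
  rw [Fin.prod_univ_succ, ← Fin.succ_last, Fin.prod_univ_castSucc]
  simp only [Fin.succ_last, Fin.last_add_one, zero_add, Fin.succ_castSucc, Fin.coeSucc_eq_succ,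
    mul_assoc]

section

variable {α : Type*} [LinearOrder α] [MeasurableSpace α]

theorem lintegral_pi_path_le {n : ℕ} (ν : Fin (n + 1) → Measure α)
    [∀ i, IsProbabilityMeasure (ν i)]
    (Φ : Fin n → α → α → ℝ≥0∞) (hΦ : ∀ j, Measurable (uncurry (Φ j)))
    (hΦ₁ : ∀ j b, Monotone (Φ j · b)) (hΦ₂ : ∀ j a, Antitone (Φ j a))
    {H G : α → ℝ≥0∞} (hH : Antitone H) (hG : Monotone G) (hHm : Measurable H)
    (hGm : Measurable G) :
    ∫⁻ y, H (y 0) * (∏ j, Φ j (y j.castSucc) (y j.succ)) * G (y (Fin.last n)) ∂Measure.pi ν ≤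
      (∫⁻ a, H a ∂ν 0) * (∏ j, ∫⁻ a, ∫⁻ b, Φ j a b ∂ν j.succ ∂ν j.castSucc) *
        ∫⁻ a, G a ∂ν (Fin.last n) := by
  induction n generalizing H with
  | zero =>
    rw [lintegral_pi_fin_succ _ (by fun_prop)]
    simpa [mul_comm] using (hG.antivary hH).lintegral_mul_le (ν := ν 0) hGm hHm
  | succ n ih =>
    set H' : α → ℝ≥0∞ := fun b => ∫⁻ a, Φ 0 a b ∂ν 0
    have hH' : Antitone H' := fun b b' hbb' => lintegral_mono fun a => hΦ₂ 0 a hbb'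
    have hH'm : Measurable H' := (hΦ 0).lintegral_prod_left
    set R : (Fin (n + 1) → α) → ℝ≥0∞ := fun z =>
      (∏ j : Fin n, Φ j.succ (z j.castSucc) (z j.succ)) * G (z (Fin.last n))
    rw [lintegral_pi_fin_succ _ (by fun_prop)]
    calc _ = ∫⁻ z, (∫⁻ a, Φ 0 a (z 0) * H a ∂ν 0) * R z ∂Measure.pi fun j => ν j.succ := by
          refine lintegral_congr fun z => ?_
          rw [← lintegral_mul_const _ (by fun_prop)]
          refine lintegral_congr fun a => ?_
          simp [R, Fin.prod_univ_succ]
          ring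
      _ ≤ ∫⁻ z, (H' (z 0) * ∫⁻ a, H a ∂ν 0) * R z ∂Measure.pi fun j => ν j.succ := by
          gcongr with z
          exact ((hΦ₁ 0 (z 0)).antivary hH).lintegral_mul_le (hΦ 0).of_uncurry_right hHm
      _ = (∫⁻ a, H a ∂ν 0) * ∫⁻ z, H' (z 0) * R z ∂Measure.pi fun j => ν j.succ := by
          rw [← lintegral_const_mul _ (by fun_prop)]
          exact lintegral_congr fun z => by ring
      _ ≤ (∫⁻ a, H a ∂ν 0) * ((∫⁻ a, H' a ∂ν 1) *
            (∏ j : Fin n, ∫⁻ a, ∫⁻ b, Φ j.succ a b ∂ν j.succ.succ ∂ν j.castSucc.succ) *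
              ∫⁻ a, G a ∂ν (Fin.last (n + 1))) := by
          gcongr
          simpa [R, mul_assoc] using ih (fun j => ν j.succ) (fun j => Φ j.succ) (fun j => hΦ _)
            (fun j => hΦ₁ _) (fun j => hΦ₂ _) hH' hH'm
      _ = _ := by
          rw [Fin.prod_univ_succ, lintegral_lintegral_swap (hΦ 0).aemeasurable]
          simp [H']
          ring

theorem lintegral_pi_cycle_le {n : ℕ} (ν : Fin (n + 2) → Measure α)
    [∀ i, IsProbabilityMeasure (ν i)]
    (Φ : Fin (n + 2) → α → α → ℝ≥0∞) (hΦ : ∀ i, Measurable (uncurry (Φ i)))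
    (hΦ₁ : ∀ i b, Monotone (Φ i · b)) (hΦ₂ : ∀ i a, Antitone (Φ i a)) :
    ∫⁻ x, ∏ i, Φ i (x i) (x (i + 1)) ∂Measure.pi ν ≤
      ∏ i, ∫⁻ a, ∫⁻ b, Φ i a b ∂ν (i + 1) ∂ν i := by
  set H : α → ℝ≥0∞ := fun b => ∫⁻ a, Φ 0 a b ∂ν 0
  set G : α → ℝ≥0∞ := fun b => ∫⁻ a, Φ (Fin.last (n + 1)) b a ∂ν 0
  have hH : Antitone H := fun b b' hbb' => lintegral_mono fun a => hΦ₂ 0 a hbb'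
  have hG : Monotone G := fun b b' hbb' => lintegral_mono fun a => hΦ₁ _ a hbb'
  set P : (Fin (n + 1) → α) → ℝ≥0∞ := fun y =>
    ∏ j : Fin n, Φ j.castSucc.succ (y j.castSucc) (y j.succ)
  rw [lintegral_pi_fin_succ _ (by fun_prop)]
  calc _ = ∫⁻ y, (∫⁻ a, Φ 0 a (y 0) * Φ (Fin.last (n + 1)) (y (Fin.last n)) a ∂ν 0) * P y
          ∂Measure.pi fun j => ν j.succ := by
        refine lintegral_congr fun y => ?_
        rw [← lintegral_mul_const _ (by fun_prop)]
        refine lintegral_congr fun a => ?_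
        rw [Fin.prod_univ_cycle fun i k =>
          Φ i ((Fin.cons a y : Fin (n + 2) → α) i) ((Fin.cons a y : Fin (n + 2) → α) k)]
        simp [P, ← Fin.succ_last]
        ring
    _ ≤ ∫⁻ y, H (y 0) * G (y (Fin.last n)) * P y ∂Measure.pi fun j => ν j.succ := by
        gcongr with y
        exact ((hΦ₁ 0 (y 0)).antivary (hΦ₂ _ _)).lintegral_mul_le (hΦ 0).of_uncurry_right
          (hΦ _).of_uncurry_left
    _ ≤ (∫⁻ a, H a ∂ν 1) * (∏ j : Fin n, ∫⁻ a, ∫⁻ b, Φ j.castSucc.succ a b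
          ∂ν j.succ.succ ∂ν j.castSucc.succ) * ∫⁻ a, G a ∂ν (Fin.last (n + 1)) := by
        simpa [P, mul_right_comm] using lintegral_pi_path_le (fun j => ν j.succ)
          (fun j => Φ j.castSucc.succ) (fun j => hΦ _) (fun j => hΦ₁ _) (fun j => hΦ₂ _) hH hG
          (hΦ 0).lintegral_prod_left (by fun_prop)
    _ = _ := by
        rw [Fin.prod_univ_cycle fun i k => ∫⁻ a, ∫⁻ b, Φ i a b ∂ν k ∂ν i,
          lintegral_lintegral_swap (hΦ 0).aemeasurable]

end

theorem countable_setOf_measure_singleton_ne_zero {α : Type*} [MeasurableSpace α]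
    [MeasurableSingletonClass α] (μ : Measure α) [SFinite μ] : {x | μ {x} ≠ 0}.Countable := by
  simpa [pos_iff_ne_zero] using Measure.countable_meas_pos_of_disjoint_iUnion₀ (μ := μ)
    (fun x => (measurableSet_singleton x).nullMeasurableSet)
    (fun x y hxy => (disjoint_singleton.2 hxy).aedisjoint)

theorem measure_prod_eq_zero_of_antichain_of_measurableSet {α β : Type*} [LinearOrder α]
    [LinearOrder β] [MeasurableSpace α] [MeasurableSpace β] {ν₁ : Measure α} {ν₂ : Measure β}
    [SFinite ν₁] [SFinite ν₂] {S : Set (α × β)} (hSm : MeasurableSet S)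
    (hS : ∀ p ∈ S, ∀ q ∈ S, ¬(p.1 < q.1 ∧ p.2 < q.2))
    (h₁ : ∀ p ∈ S, ν₁ {p.1} = 0) (h₂ : ∀ p ∈ S, ν₂ {p.2} = 0) : ν₁.prod ν₂ S = 0 := by
  have hslice : ∀ x x', x < x' → (Prod.mk x ⁻¹' S ∩ Prod.mk x' ⁻¹' S).Subsingleton := by
    rintro x x' hxx' y ⟨hy, hy'⟩ z ⟨hz, hz'⟩
    exact le_antisymm (not_lt.1 fun h => hS _ hz _ hy' ⟨hxx', h⟩)
      (not_lt.1 fun h => hS _ hy _ hz' ⟨hxx', h⟩)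
  have hdisj : Pairwise (AEDisjoint ν₂ on fun x => Prod.mk x ⁻¹' S) := by
    refine fun x x' hne => ?_
    wlog hlt : x < x' generalizing x x'
    · exact (this x' x hne.symm ((lt_or_gt_of_ne hne).resolve_left hlt)).symm
    exact (measure_null_iff_singleton (hslice x x' hlt).countable).2
      fun y hy => h₂ (x, y) hy.1
  have hpos : {x | 0 < ν₂ (Prod.mk x ⁻¹' S)}.Countable :=
    Measure.countable_meas_pos_of_disjoint_iUnion₀
      (fun x => (measurable_prodMk_left hSm).nullMeasurableSet) hdisj
  rw [Measure.prod_apply hSm, lintegral_eq_zero_iff (measurable_measure_prodMk_left hSm)]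
  refine measure_mono_null (fun x hx => pos_iff_ne_zero.2 hx)
    ((measure_null_iff_singleton hpos).2 fun x hx => ?_)
  obtain ⟨y, hy⟩ := nonempty_of_measure_ne_zero hx.ne'
  exact h₁ (x, y) hy

noncomputable def monotoneExtension {β : Type*} [Preorder β] (D : Set β) (f : β → ℝ≥0∞) (p : β) :
    ℝ≥0∞ :=
  ⨆ q ∈ D, (Ici q).indicator (fun _ => f q) p

section monotoneExtension

variable {β : Type*} [Preorder β] {D : Set β} {f : β → ℝ≥0∞}

theorem le_monotoneExtension {p q : β} (hq : q ∈ D) (hqp : q ≤ p) :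
    f q ≤ monotoneExtension D f p :=
  le_iSup₂_of_le q hq (indicator_of_mem (mem_Ici.2 hqp) fun _ => f q).ge

theorem monotoneExtension_le (hf : Monotone f) (p : β) : monotoneExtension D f p ≤ f p :=
  iSup₂_le fun _ _ => indicator_apply_le fun hqp => hf hqp

theorem monotone_monotoneExtension : Monotone (monotoneExtension D f) := by
  intro p p' hpp'
  refine iSup₂_mono fun q _ => ?_
  by_cases hqp : q ≤ p
  · rw [indicator_of_mem (mem_Ici.2 hqp), indicator_of_mem (mem_Ici.2 (hqp.trans hpp'))]
  · rw [indicator_of_notMem (mt mem_Ici.1 hqp)]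
    exact zero_le

theorem measurable_monotoneExtension [TopologicalSpace β] [MeasurableSpace β]
    [OpensMeasurableSpace β] [ClosedIciTopology β] (hD : D.Countable) :
    Measurable (monotoneExtension D f) :=
  Measurable.biSup D hD fun _ _ => measurable_const.indicator measurableSet_Ici

end monotoneExtension

def ratsAndAtoms (ν : Measure ℝ) : Set ℝ := range ((↑) : ℚ → ℝ) ∪ {x | ν {x} ≠ 0}

theorem countable_ratsAndAtoms (ν : Measure ℝ) [SFinite ν] : (ratsAndAtoms ν).Countable :=
  (countable_range _).union (countable_setOf_measure_singleton_ne_zero ν)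

theorem measure_singleton_eq_zero_of_notMem_ratsAndAtoms {ν : Measure ℝ} {x : ℝ}
    (hx : x ∉ ratsAndAtoms ν) : ν {x} = 0 :=
  not_not.1 fun h => hx (Or.inr h)

theorem exists_mem_ratsAndAtoms_mem_Icc (ν : Measure ℝ) {x y : ℝ} (hxy : x ≤ y)
    (h : x < y ∨ x ∈ ratsAndAtoms ν) : ∃ q ∈ ratsAndAtoms ν, q ∈ Icc x y := by
  rcases h with hlt | hx
  · obtain ⟨r, hr⟩ := exists_rat_btwn hlt
    exact ⟨r, Or.inl ⟨r, rfl⟩, hr.1.le, hr.2.le⟩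
  · exact ⟨x, hx, le_rfl, hxy⟩

section

variable {ν₁ ν₂ : Measure ℝ} [SFinite ν₁] [SFinite ν₂]

theorem measure_prod_eq_zero_of_antichain {S : Set (ℝ × ℝ)}
    (hS : ∀ p ∈ S, ∀ q ∈ S, ¬(p.1 < q.1 ∧ p.2 < q.2))
    (h₁ : ∀ p ∈ S, ν₁ {p.1} = 0) (h₂ : ∀ p ∈ S, ν₂ {p.2} = 0) : ν₁.prod ν₂ S = 0 := by
  have hclosure : ∀ p ∈ closure S, ∀ q ∈ closure S, ¬(p.1 < q.1 ∧ p.2 < q.2) := by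
    have hopen : IsOpen {z : (ℝ × ℝ) × (ℝ × ℝ) | z.1.1 < z.2.1 ∧ z.1.2 < z.2.2} :=
      (isOpen_lt continuous_fst.fst continuous_snd.fst).inter
        (isOpen_lt continuous_fst.snd continuous_snd.snd)
    have : closure (S ×ˢ S) ⊆ {z | ¬(z.1.1 < z.2.1 ∧ z.1.2 < z.2.2)} :=
      closure_minimal (fun z hz => hS _ hz.1 _ hz.2) hopen.isClosed_compl
    rw [closure_prod_eq] at this
    exact fun p hp q hq => this (mk_mem_prod hp hq)
  set T := closure S ∩ (Prod.fst ⁻¹' {x | ν₁ {x} ≠ 0}ᶜ ∩ Prod.snd ⁻¹' {x | ν₂ {x} ≠ 0}ᶜ)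
  have hTm : MeasurableSet T :=
    isClosed_closure.measurableSet.inter
      (((countable_setOf_measure_singleton_ne_zero ν₁).measurableSet.compl.preimage
        measurable_fst).inter
      ((countable_setOf_measure_singleton_ne_zero ν₂).measurableSet.compl.preimage
        measurable_snd))
  refine measure_mono_null (t := T)
    (fun p hp => ⟨subset_closure hp, not_not.2 (h₁ p hp), not_not.2 (h₂ p hp)⟩) ?_
  exact measure_prod_eq_zero_of_antichain_of_measurableSet hTm
    (fun p hp q hq => hclosure p hp.1 q hq.1) (fun p hp => not_not.1 hp.2.1)
    (fun p hp => not_not.1 hp.2.2)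

theorem IsUpperSet.measure_prod_diff_upperClosure_eq_zero {U : Set (ℝ × ℝ)}
    (hU : IsUpperSet U) :
    ν₁.prod ν₂ (U \ upperClosure (U ∩ ratsAndAtoms ν₁ ×ˢ ratsAndAtoms ν₂)) = 0 := by
  set Q₁ := ratsAndAtoms ν₁
  set Q₂ := ratsAndAtoms ν₂
  set B := U \ upperClosure (U ∩ Q₁ ×ˢ Q₂)
  have hB : ∀ p ∈ B, ∀ p' ∈ B, p ≤ p' → (p.1 < p'.1 ∨ p.1 ∈ Q₁) → (p.2 < p'.2 ∨ p.2 ∈ Q₂) →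
      False := by
    intro p hp p' hp' hpp' h₁ h₂
    obtain ⟨q₁, hq₁, hpq₁, hqp₁⟩ := exists_mem_ratsAndAtoms_mem_Icc ν₁ hpp'.1 h₁
    obtain ⟨q₂, hq₂, hpq₂, hqp₂⟩ := exists_mem_ratsAndAtoms_mem_Icc ν₂ hpp'.2 h₂
    exact hp'.2 (mem_upperClosure.2 ⟨(q₁, q₂), ⟨hU ⟨hpq₁, hpq₂⟩ hp.1, hq₁, hq₂⟩, hqp₁, hqp₂⟩)
  have hnull : ∀ p ∈ B, ν₁.prod ν₂ {p} = 0 := by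
    intro p hp
    rw [← singleton_prod_singleton, Measure.prod_prod]
    by_cases h₁ : p.1 ∈ Q₁
    · by_cases h₂ : p.2 ∈ Q₂
      · exact (hB p hp p hp le_rfl (Or.inr h₁) (Or.inr h₂)).elim
      · rw [measure_singleton_eq_zero_of_notMem_ratsAndAtoms h₂, mul_zero]
    · rw [measure_singleton_eq_zero_of_notMem_ratsAndAtoms h₁, zero_mul]
  have hfst : (B ∩ Prod.fst ⁻¹' Q₁).Countable := by
    refine MapsTo.countable_of_injOn (f := Prod.fst) (fun p hp => hp.2) ?_
      (countable_ratsAndAtoms ν₁)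
    rintro p ⟨hp, hp₁⟩ p' ⟨hp', -⟩ (h : p.1 = p'.1)
    refine Prod.ext h (le_antisymm (not_lt.1 fun hlt => ?_) (not_lt.1 fun hlt => ?_))
    · exact hB p' hp' p hp ⟨h.ge, hlt.le⟩ (Or.inr (h ▸ hp₁)) (Or.inl hlt)
    · exact hB p hp p' hp' ⟨h.le, hlt.le⟩ (Or.inr hp₁) (Or.inl hlt)
  have hsnd : (B ∩ Prod.snd ⁻¹' Q₂).Countable := by
    refine MapsTo.countable_of_injOn (f := Prod.snd) (fun p hp => hp.2) ?_
      (countable_ratsAndAtoms ν₂)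
    rintro p ⟨hp, hp₂⟩ p' ⟨hp', -⟩ (h : p.2 = p'.2)
    refine Prod.ext (le_antisymm (not_lt.1 fun hlt => ?_) (not_lt.1 fun hlt => ?_)) h
    · exact hB p' hp' p hp ⟨hlt.le, h.ge⟩ (Or.inl hlt) (Or.inr (h ▸ hp₂))
    · exact hB p hp p' hp' ⟨hlt.le, h.le⟩ (Or.inl hlt) (Or.inr hp₂)
  have hcover : B ⊆ (B ∩ Prod.fst ⁻¹' Q₁) ∪ (B ∩ Prod.snd ⁻¹' Q₂) ∪
      (B ∩ (Prod.fst ⁻¹' Q₁ᶜ ∩ Prod.snd ⁻¹' Q₂ᶜ)) := by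
    intro p hp
    by_cases h₁ : p.1 ∈ Q₁ <;> by_cases h₂ : p.2 ∈ Q₂ <;> simp_all
  refine measure_mono_null hcover (measure_union_null (measure_union_null
    ((measure_null_iff_singleton hfst).2 fun p hp => hnull p hp.1)
    ((measure_null_iff_singleton hsnd).2 fun p hp => hnull p hp.1)) ?_)
  refine measure_prod_eq_zero_of_antichain (fun p hp p' hp' hlt => ?_)
    (fun p hp => measure_singleton_eq_zero_of_notMem_ratsAndAtoms hp.2.1)
    (fun p hp => measure_singleton_eq_zero_of_notMem_ratsAndAtoms hp.2.2)
  exact hB p hp.1 p' hp'.1 ⟨hlt.1.le, hlt.2.le⟩ (Or.inl hlt.1) (Or.inl hlt.2)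

theorem Monotone.monotoneExtension_ae_eq {f : ℝ × ℝ → ℝ≥0∞} (hf : Monotone f) :
    monotoneExtension (ratsAndAtoms ν₁ ×ˢ ratsAndAtoms ν₂) f =ᵐ[ν₁.prod ν₂] f := by
  set D := ratsAndAtoms ν₁ ×ˢ ratsAndAtoms ν₂
  set U : ℚ → Set (ℝ × ℝ) := fun c => {p | ENNReal.ofReal c < f p}
  have hcover : {p | monotoneExtension D f p ≠ f p} ⊆ ⋃ c, U c \ upperClosure (U c ∩ D) := by
    intro p hp
    obtain ⟨c, -, hFc, hcf⟩ :=
      ENNReal.lt_iff_exists_rat_btwn.1 ((monotoneExtension_le hf p).lt_of_ne hp)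
    refine mem_iUnion.2 ⟨c, hcf, fun hmem => ?_⟩
    obtain ⟨q, ⟨hqU, hqD⟩, hqp⟩ := mem_upperClosure.1 hmem
    exact (hqU.trans_le (le_monotoneExtension hqD hqp)).not_ge hFc.le
  have hU : ∀ c, IsUpperSet (U c) := fun c => isUpperSet_setOfPred.2 fun p q hpq hp =>
    hp.trans_le (hf hpq)
  exact measure_mono_null hcover (measure_iUnion_null fun c =>
    (hU c).measure_prod_diff_upperClosure_eq_zero)

end

namespace ProbabilityTheory

section

variable {Ω β γ : Type*} [MeasurableSpace Ω] [MeasurableSpace β] [MeasurableSpace γ]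
  {μ : Measure Ω} [IsFiniteMeasure μ] {X : Ω → β} {Y : Ω → γ}

theorem IndepFun.ae_of_ae_prod (h : IndepFun X Y μ) (hX : AEMeasurable X μ)
    (hY : AEMeasurable Y μ) {P : β × γ → Prop} (hP : ∀ᵐ z ∂(μ.map X).prod (μ.map Y), P z) :
    ∀ᵐ ω ∂μ, P (X ω, Y ω) := by
  rw [← (indepFun_iff_map_prod_eq_prod_map_map hX hY).1 h] at hP
  exact ae_of_ae_map (hX.prodMk hY) hP

theorem IndepFun.lintegral_comp_eq_lintegral_lintegral (h : IndepFun X Y μ) (hX : Measurable X)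
    (hY : Measurable Y) {Φ : β → γ → ℝ≥0∞} (hΦ : Measurable (uncurry Φ)) :
    ∫⁻ ω, Φ (X ω) (Y ω) ∂μ = ∫⁻ a, ∫⁻ b, Φ a b ∂μ.map Y ∂μ.map X := by
  calc ∫⁻ ω, Φ (X ω) (Y ω) ∂μ = ∫⁻ z, uncurry Φ z ∂μ.map fun ω => (X ω, Y ω) :=
        (lintegral_map hΦ (hX.prodMk hY)).symm
    _ = ∫⁻ a, ∫⁻ b, Φ a b ∂μ.map Y ∂μ.map X := by
        rw [(indepFun_iff_map_prod_eq_prod_map_map hX.aemeasurable hY.aemeasurable).1 h,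
          lintegral_prod _ hΦ.aemeasurable]
        rfl

end

theorem iIndepFun.lintegral_prod_cycle_le {α Ω : Type*} [LinearOrder α]
    [MeasurableSpace α] [MeasurableSpace Ω] {μ : Measure Ω} [IsProbabilityMeasure μ] {n : ℕ}
    {X : Fin (n + 2) → Ω → α} (hX : ∀ i, Measurable (X i)) (hindep : iIndepFun X μ)
    (Φ : Fin (n + 2) → α → α → ℝ≥0∞) (hΦ : ∀ i, Measurable (uncurry (Φ i)))
    (hΦ₁ : ∀ i b, Monotone (Φ i · b)) (hΦ₂ : ∀ i a, Antitone (Φ i a)) :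
    ∫⁻ ω, ∏ i, Φ i (X i ω) (X (i + 1) ω) ∂μ ≤ ∏ i, ∫⁻ ω, Φ i (X i ω) (X (i + 1) ω) ∂μ := by
  have hXm : Measurable fun ω i => X i ω := measurable_pi_lambda _ hX
  have (i : Fin (n + 2)) : IsProbabilityMeasure (μ.map (X i)) :=
    Measure.isProbabilityMeasure_map (hX i).aemeasurable
  calc ∫⁻ ω, ∏ i, Φ i (X i ω) (X (i + 1) ω) ∂μ
      = ∫⁻ x, ∏ i, Φ i (x i) (x (i + 1)) ∂Measure.pi fun i => μ.map (X i) := by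
        rw [← hindep.map_fun_eq_pi_map fun i => (hX i).aemeasurable,
          lintegral_map (by fun_prop) hXm]
    _ ≤ ∏ i, ∫⁻ a, ∫⁻ b, Φ i a b ∂μ.map (X (i + 1)) ∂μ.map (X i) :=
        lintegral_pi_cycle_le _ Φ hΦ hΦ₁ hΦ₂
    _ = ∏ i, ∫⁻ ω, Φ i (X i ω) (X (i + 1) ω) ∂μ := by
        refine Finset.prod_congr rfl fun i _ => ?_
        exact ((hindep.indepFun (by simp)).lintegral_comp_eq_lintegral_lintegral (hX _) (hX _)
          (hΦ i)).symm

end ProbabilityTheory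

theorem cyclic_product_inequality_general {Ω : Type*} [MeasurableSpace Ω] (μ : Measure Ω)
    [IsProbabilityMeasure μ] (K : ℕ) [NeZero K] (X : Fin K → Ω → ℝ)
    (hmeas : ∀ i, Measurable (X i))
    (hindep : ProbabilityTheory.iIndepFun (m := fun _ => Real.measurableSpace) X μ)
    (f : Fin K → ℝ → ℝ → ℝ)
    (hmono1 : ∀ i y, Monotone fun x => f i x y)
    (hmono2 : ∀ i x, Monotone fun y => f i x y) :
    ∫⁻ ω, ∏ i, ENNReal.ofReal (f i (X i ω) (-X (i + 1) ω)) ∂μ ≤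
      ∏ i, ∫⁻ ω, ENNReal.ofReal (f i (X i ω) (-X (i + 1) ω)) ∂μ := by
  rcases K with _ | _ | n
  · exact absurd rfl (NeZero.ne 0)
  · simp
  set F : Fin (n + 2) → ℝ × ℝ → ℝ≥0∞ := fun i =>
    monotoneExtension (ratsAndAtoms (μ.map (X i)) ×ˢ ratsAndAtoms (μ.map fun ω => -X (i + 1) ω))
      fun p => ENNReal.ofReal (f i p.1 p.2)
  have hF : ∀ i, Measurable (F i) := fun i => measurable_monotoneExtension
    ((countable_ratsAndAtoms _).prod (countable_ratsAndAtoms _))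
  have hae : ∀ i, ∀ᵐ ω ∂μ,
      F i (X i ω, -X (i + 1) ω) = ENNReal.ofReal (f i (X i ω) (-X (i + 1) ω)) := by
    intro i
    have hf : Monotone fun p : ℝ × ℝ => ENNReal.ofReal (f i p.1 p.2) :=
      monotone_prod_iff.2 ⟨fun a => ENNReal.ofReal_mono.comp (hmono2 i a),
        fun b => ENNReal.ofReal_mono.comp (hmono1 i b)⟩
    exact ((hindep.indepFun (by simp)).comp measurable_id measurable_neg).ae_of_ae_prod
      (hmeas i).aemeasurable (hmeas _).neg.aemeasurable hf.monotoneExtension_ae_eq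
  calc _ = ∫⁻ ω, ∏ i, F i (X i ω, -X (i + 1) ω) ∂μ :=
        lintegral_congr_ae ((ae_all_iff.2 hae).mono fun ω hω =>
          Finset.prod_congr rfl fun i _ => (hω i).symm)
    _ ≤ ∏ i, ∫⁻ ω, F i (X i ω, -X (i + 1) ω) ∂μ :=
        hindep.lintegral_prod_cycle_le hmeas (fun i a b => F i (a, -b))
          (fun i => (hF i).comp (measurable_fst.prodMk measurable_snd.neg))
          (fun i b a a' haa' => monotone_monotoneExtension ⟨haa', le_rfl⟩)
          (fun i a b b' hbb' => monotone_monotoneExtension ⟨le_rfl, neg_le_neg hbb'⟩)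
    _ = _ := Finset.prod_congr rfl fun i _ => lintegral_congr_ae (hae i)

/-- Cyclic product inequality: for independent `X₁,…,X_K` (with `X_{K+1} = X₁`) and
component-wise increasing `fᵢ : ℝ² → [0,∞)`,
`E[∏ᵢ fᵢ(Xᵢ, −X_{i+1})] ≤ ∏ᵢ E[fᵢ(Xᵢ, −X_{i+1})]`. -/
theorem cyclic_product_inequality {Ω : Type*} [MeasurableSpace Ω] (μ : Measure Ω)
    [IsProbabilityMeasure μ] (K : ℕ) [NeZero K] (X : Fin K → Ω → ℝ)
    (hmeas : ∀ i, Measurable (X i))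
    (hindep : ProbabilityTheory.iIndepFun (m := fun _ => Real.measurableSpace) X μ)
    (f : Fin K → ℝ → ℝ → ℝ)
    (hmono1 : ∀ i y, Monotone fun x => f i x y)
    (hmono2 : ∀ i x, Monotone fun y => f i x y)
    (hnn : ∀ i x y, 0 ≤ f i x y) :
    ∫⁻ ω, ∏ i, ENNReal.ofReal (f i (X i ω) (-X (i + 1) ω)) ∂μ ≤
      ∏ i, ∫⁻ ω, ENNReal.ofReal (f i (X i ω) (-X (i + 1) ω)) ∂μ :=
  cyclic_product_inequality_general μ K X hmeas hindep f hmono1 hmono2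
end
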